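/- arXiv:2410.21905 — 3 statements merged into one kernel-verified Lean document; each statement's English description precedes it below -/
import Mathlib

section
/- The function f(θ) = (1/4)cot(θ/2) + Σ_{n≥1} q^n sin(nθ)/(1-q^n), extended meromorphically in θ, satisfies the quasi-periodicity f(θ + 2πτ) = f(θ) - i/2. -/
open Complex Real

lemma geom1 {a : ℂ} (h : ‖a‖ < 1) : ∑' n : ℕ, a ^ (n+1) = a / (1 - a) := by
  have h1 : ∑' n : ℕ, a ^ (n+1) = ∑' n : ℕ, a * a ^ n := by
    refine tsum_congr fun n => ?_; rw [pow_succ, mul_comm]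
  rw [h1, tsum_mul_left, tsum_geometric_of_norm_lt_one h, div_eq_mul_inv]

lemma summable_geom1 {a : ℂ} (h : ‖a‖ < 1) : Summable (fun n : ℕ => a ^ (n+1)) := by
  have := (summable_geometric_of_norm_lt_one h).mul_left a
  refine this.congr fun n => ?_
  rw [pow_succ, mul_comm]

lemma summable_frac {q y : ℂ} (hq : ‖q‖ < 1) (hqy : ‖q*y‖ < 1) :
    Summable (fun m : ℕ => q^(m+1)*y/(1 - q^(m+1)*y)) := by
  have key : ∀ m : ℕ, ‖q^(m+1)*y‖ ≤ ‖q‖^m * ‖q*y‖ := by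
    intro m
    have : q^(m+1)*y = q^m * (q*y) := by ring
    rw [this, norm_mul, norm_pow]
  have hlt : ∀ m : ℕ, ‖q^(m+1)*y‖ < 1 := fun m => lt_of_le_of_lt (key m)
    (by
      calc ‖q‖^m * ‖q*y‖ ≤ 1 * ‖q*y‖ := by
            apply mul_le_mul_of_nonneg_right _ (norm_nonneg _)
            exact pow_le_one₀ (norm_nonneg _) hq.le
        _ < 1 := by rwa [one_mul])
  apply Summable.of_norm_bounded (g := fun m : ℕ => ‖q‖^m * (‖q*y‖ / (1 - ‖q*y‖)))
  · exact (summable_geometric_of_lt_one (norm_nonneg _) hq).mul_right _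
  · intro m
    rw [norm_div]
    have hqym : ‖q^(m+1)*y‖ ≤ ‖q*y‖ := by
      refine le_trans (key m) ?_
      calc ‖q‖^m * ‖q*y‖ ≤ 1 * ‖q*y‖ :=
            mul_le_mul_of_nonneg_right (pow_le_one₀ (norm_nonneg _) hq.le) (norm_nonneg _)
        _ = ‖q*y‖ := one_mul _
    have hden : 1 - ‖q*y‖ ≤ ‖1 - q^(m+1)*y‖ := by
      have h2 := norm_sub_norm_le (1 : ℂ) (q^(m+1)*y)
      simp only [norm_one] at h2
      linarith
    have hpos : (0:ℝ) < 1 - ‖q*y‖ := by linarith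
    have hpos2 : (0:ℝ) < ‖1 - q^(m+1)*y‖ := lt_of_lt_of_le hpos hden
    rw [div_le_iff₀ hpos2]
    calc ‖q^(m+1)*y‖ ≤ ‖q‖^m * ‖q*y‖ := key m
      _ = (‖q‖^m * (‖q*y‖ / (1 - ‖q*y‖))) * (1 - ‖q*y‖) := by rw [mul_assoc, div_mul_cancel₀ _ hpos.ne']
      _ ≤ (‖q‖^m * (‖q*y‖ / (1 - ‖q*y‖))) * ‖1 - q^(m+1)*y‖ := by
          apply mul_le_mul_of_nonneg_left hden
          positivity

lemma summable_double {q y : ℂ} (hq : ‖q‖ < 1) (hqy : ‖q*y‖ < 1) :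
    Summable (fun p : ℕ×ℕ => (q^(p.2+1)*y)^(p.1+1)) := by
  have hb : Summable (fun p : ℕ×ℕ => ‖q*y‖^(p.1+1) * ‖q‖^(p.2)) := by
    have h1 : Summable (fun n : ℕ => ‖q*y‖^(n+1)) := by
      have := summable_geometric_of_lt_one (norm_nonneg (q*y)) hqy
      exact (this.mul_left ‖q*y‖).congr fun n => by rw [pow_succ, mul_comm]
    have h2 : Summable (fun m : ℕ => ‖q‖^m) := summable_geometric_of_lt_one (norm_nonneg q) hq
    exact h1.mul_of_nonneg h2 (fun n => by positivity) (fun m => by positivity)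
  apply Summable.of_norm_bounded hb
  rintro ⟨n, m⟩
  simp only [norm_pow, norm_mul, norm_pow]
  calc (‖q‖^(m+1) * ‖y‖)^(n+1) = ‖q‖^(m*(n+1)) * (‖q‖*‖y‖)^(n+1) := by ring
    _ ≤ ‖q‖^m * (‖q‖*‖y‖)^(n+1) := by
        apply mul_le_mul_of_nonneg_right _ (by positivity)
        exact pow_le_pow_of_le_one (norm_nonneg q) hq.le (Nat.le_mul_of_pos_right m n.succ_pos)
    _ = (‖q‖*‖y‖)^(n+1) * ‖q‖^m := by ring

lemma norm_pow_mul_le {q y : ℂ} (hq : ‖q‖ < 1) (m : ℕ) : ‖q^(m+1)*y‖ ≤ ‖q*y‖ := by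
  have : q^(m+1)*y = q^m * (q*y) := by ring
  rw [this, norm_mul, norm_pow]
  calc ‖q‖^m * ‖q*y‖ ≤ 1 * ‖q*y‖ :=
        mul_le_mul_of_nonneg_right (pow_le_one₀ (norm_nonneg _) hq.le) (norm_nonneg _)
    _ = ‖q*y‖ := one_mul _

lemma key_swap {q x : ℂ} (hq : ‖q‖ < 1) (ha : ‖q*x‖ < 1) (hb : ‖q*x⁻¹‖ < 1) :
    ∑' n : ℕ, q^(n+1) * ((x⁻¹)^(n+1) - x^(n+1)) / (1 - q^(n+1))
    = ∑' m : ℕ, (q^(m+1)*x⁻¹/(1 - q^(m+1)*x⁻¹) - q^(m+1)*x/(1 - q^(m+1)*x)) := by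
  have hqn : ∀ n : ℕ, ‖q^(n+1)‖ < 1 := fun n => by
    rw [norm_pow]; exact pow_lt_one₀ (norm_nonneg q) hq n.succ_ne_zero
  set F : ℕ → ℕ → ℂ := fun n m => (q^(m+1)*x⁻¹)^(n+1) - (q^(m+1)*x)^(n+1) with hF
  have hpow : ∀ n m : ℕ, ((q^(n+1))^(m+1) : ℂ) = (q^(m+1))^(n+1) := fun n m => by
    rw [← pow_mul, ← pow_mul, Nat.mul_comm]
  have step1 : ∀ n : ℕ, q^(n+1) * ((x⁻¹)^(n+1) - x^(n+1)) / (1 - q^(n+1))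
      = ∑' m : ℕ, F n m := by
    intro n
    have hg := geom1 (hqn n)
    calc q^(n+1) * ((x⁻¹)^(n+1) - x^(n+1)) / (1 - q^(n+1))
        = (q^(n+1) / (1 - q^(n+1))) * ((x⁻¹)^(n+1) - x^(n+1)) := by ring
      _ = (∑' m : ℕ, (q^(n+1))^(m+1)) * ((x⁻¹)^(n+1) - x^(n+1)) := by rw [hg]
      _ = ∑' m : ℕ, (q^(n+1))^(m+1) * ((x⁻¹)^(n+1) - x^(n+1)) := by rw [tsum_mul_right]
      _ = ∑' m : ℕ, F n m := by
          refine tsum_congr fun m => ?_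
          rw [hF]
          simp only []
          rw [mul_pow, mul_pow, hpow]
          ring
  have hsumF : Summable (Function.uncurry F) := by
    have h1 := summable_double hq hb
    have h2 := summable_double hq ha
    exact h1.sub h2
  have hswap : ∑' (n : ℕ) (m : ℕ), F n m = ∑' (m : ℕ) (n : ℕ), F n m :=
    (Summable.tsum_comm hsumF).symm
  have step2 : ∀ m : ℕ, ∑' n : ℕ, F n m
      = q^(m+1)*x⁻¹/(1 - q^(m+1)*x⁻¹) - q^(m+1)*x/(1 - q^(m+1)*x) := by
    intro m
    have hna : ‖q^(m+1)*x‖ < 1 := lt_of_le_of_lt (norm_pow_mul_le hq m) ha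
    have hnb : ‖q^(m+1)*x⁻¹‖ < 1 := lt_of_le_of_lt (norm_pow_mul_le hq m) hb
    rw [hF]
    rw [Summable.tsum_sub (summable_geom1 hnb) (summable_geom1 hna), geom1 hnb, geom1 hna]
  calc ∑' n : ℕ, q^(n+1) * ((x⁻¹)^(n+1) - x^(n+1)) / (1 - q^(n+1))
      = ∑' (n : ℕ) (m : ℕ), F n m := tsum_congr step1
    _ = ∑' (m : ℕ) (n : ℕ), F n m := hswap
    _ = ∑' m : ℕ, (q^(m+1)*x⁻¹/(1 - q^(m+1)*x⁻¹) - q^(m+1)*x/(1 - q^(m+1)*x)) :=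
        tsum_congr step2

lemma telescope {q x : ℂ} (hq : ‖q‖ < 1) (hq0 : q ≠ 0) (ha : ‖q*x‖ < 1) (hx : 1 < ‖x‖) :
    (∑' m : ℕ, (q^(m+1)*(q*x)⁻¹/(1 - q^(m+1)*(q*x)⁻¹) - q^(m+1)*(q*x)/(1 - q^(m+1)*(q*x))))
    - (∑' m : ℕ, (q^(m+1)*x⁻¹/(1 - q^(m+1)*x⁻¹) - q^(m+1)*x/(1 - q^(m+1)*x)))
    = x⁻¹/(1-x⁻¹) + q*x/(1-q*x) := by
  have hb : ‖q*x⁻¹‖ < 1 := by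
    rw [norm_mul, norm_inv]
    calc ‖q‖ * ‖x‖⁻¹ ≤ ‖q‖ * 1 := by
          apply mul_le_mul_of_nonneg_left _ (norm_nonneg q)
          rw [inv_le_one_iff₀]; right; exact hx.le
      _ < 1 := by rwa [mul_one]
  set v : ℕ → ℂ := fun m => q^m*x⁻¹/(1-q^m*x⁻¹) with hv'
  set u : ℕ → ℂ := fun m => q^(m+1)*x/(1-q^(m+1)*x) with hu'
  have hu : Summable u := summable_frac hq ha
  have hvs : Summable (fun m => v (m+1)) := summable_frac hq hb
  have hv : Summable v := (summable_nat_add_iff 1).1 hvs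
  have hus : Summable (fun m => u (m+1)) := (summable_nat_add_iff 1).2 hu
  have e1 : ∀ m : ℕ, q^(m+1)*(q*x)⁻¹/(1 - q^(m+1)*(q*x)⁻¹) - q^(m+1)*(q*x)/(1 - q^(m+1)*(q*x))
      = v m - u (m+1) := by
    intro m
    have h1 : q^(m+1)*(q*x)⁻¹ = q^m*x⁻¹ := by
      rw [pow_succ, mul_inv]
      have hx0 : x ≠ 0 := by
        intro h; rw [h, norm_zero] at hx; linarith
      field_simp
    have h2 : q^(m+1)*(q*x) = q^(m+1+1)*x := by ring
    rw [h1, h2]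
  have e2 : ∀ m : ℕ, q^(m+1)*x⁻¹/(1 - q^(m+1)*x⁻¹) - q^(m+1)*x/(1 - q^(m+1)*x)
      = v (m+1) - u m := fun m => rfl
  rw [tsum_congr e1, tsum_congr e2, Summable.tsum_sub hv hus, Summable.tsum_sub hvs hu,
    Summable.tsum_eq_zero_add hv, Summable.tsum_eq_zero_add hu]
  have hv0 : v 0 = x⁻¹/(1-x⁻¹) := by simp [hv']
  have hu0 : u 0 = q*x/(1-q*x) := by simp [hu']
  rw [hv0, hu0]
  ring

lemma cot_half {z : ℂ} (h1 : Complex.exp (z * I) ≠ 1) :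
    Complex.cot (z/2) = I * (Complex.exp (z*I) + 1) / (Complex.exp (z*I) - 1) := by
  set h := Complex.exp (z/2 * I) with hh
  have h0 : h ≠ 0 := Complex.exp_ne_zero _
  have hsq : h^2 = Complex.exp (z*I) := by
    rw [hh, sq, ← Complex.exp_add]
    congr 1
    ring
  have hne : h^2 ≠ 1 := by rw [hsq]; exact h1
  have hinv : Complex.exp (-(z/2) * I) = h⁻¹ := by
    rw [hh, ← Complex.exp_neg]
    congr 1
    ring
  have hcot : Complex.cot (z/2) = Complex.cos (z/2) / Complex.sin (z/2) := rfl
  rw [hcot, Complex.sin, Complex.cos, hinv, ← hh, ← hsq]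
  have hd : h⁻¹ - h ≠ 0 := by
    intro hc
    apply hne
    have : h⁻¹ = h := by linear_combination hc
    calc h^2 = h * h := sq h
      _ = h⁻¹ * h := by rw [this]
      _ = 1 := inv_mul_cancel₀ h0
  have hne1 : h^2 - 1 ≠ 0 := sub_ne_zero.mpr hne
  have hne2 : 1 - h^2 ≠ 0 := sub_ne_zero.mpr (Ne.symm hne)
  have hI : I ≠ 0 := Complex.I_ne_zero
  have hd2 : (h⁻¹ - h) * I / 2 ≠ 0 := by
    apply div_ne_zero (mul_ne_zero hd hI) two_ne_zero
  rw [div_eq_div_iff hd2 hne1]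
  linear_combination (-(h^2+1)*(h⁻¹-h)/2) * Complex.I_sq + h * (mul_inv_cancel₀ h0)

lemma strip_id (τ : ℂ) (hτ : 0 < τ.im) (q : ℂ)
    (hq : q = Complex.exp (2 * Real.pi * Complex.I * τ))
    (f : ℂ → ℂ)
    (hf : ∀ θ : ℂ, |θ.im| < 2 * Real.pi * τ.im →
      f θ = 1/4 * Complex.cot (θ/2)
        + ∑' n : ℕ, q ^ (n+1) * Complex.sin ((n+1) * θ) / (1 - q ^ (n+1)))
    (z : ℂ) (h1 : -(2 * Real.pi * τ.im) < z.im) (h2 : z.im < 0) :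
    f (z + 2 * Real.pi * τ) = f z - Complex.I / 2 := by
  have hpi : (0:ℝ) < Real.pi := Real.pi_pos
  have hT : (0:ℝ) < 2 * Real.pi * τ.im := by positivity
  set x : ℂ := Complex.exp (z * I) with hx'
  have hexp_lt : ∀ t : ℝ, t < 0 → Real.exp t < 1 := fun t ht => by
    rw [← Real.exp_zero]; exact Real.exp_lt_exp.mpr ht
  have hqnorm : ‖q‖ = Real.exp (-(2*Real.pi*τ.im)) := by
    rw [hq, Complex.norm_exp]
    congr 1
    simp [Complex.mul_re, Complex.mul_im]
    try ring
  have hxnorm : ‖x‖ = Real.exp (-z.im) := by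
    rw [hx', Complex.norm_exp]
    congr 1
    simp [Complex.mul_re]
  have hqlt : ‖q‖ < 1 := by rw [hqnorm]; exact hexp_lt _ (by linarith)
  have hx1 : 1 < ‖x‖ := by
    rw [hxnorm, ← Real.exp_zero]
    exact Real.exp_lt_exp.mpr (by linarith)
  have ha : ‖q*x‖ < 1 := by
    rw [norm_mul, hqnorm, hxnorm, ← Real.exp_add]
    exact hexp_lt _ (by linarith)
  have hb : ‖q*x⁻¹‖ < 1 := by
    rw [norm_mul, norm_inv, hqnorm, hxnorm, ← Real.exp_neg, ← Real.exp_add]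
    exact hexp_lt _ (by linarith)
  have hq0 : q ≠ 0 := by rw [hq]; exact Complex.exp_ne_zero _
  have hx0 : x ≠ 0 := Complex.exp_ne_zero _
  have hqx_eq : q * x = Complex.exp ((z + 2*Real.pi*τ) * I) := by
    rw [hq, hx', ← Complex.exp_add]
    congr 1
    ring
  have ha2 : ‖q*(q*x)‖ < 1 := by
    rw [norm_mul]
    calc ‖q‖ * ‖q*x‖ ≤ 1 * ‖q*x‖ :=
          mul_le_mul_of_nonneg_right hqlt.le (norm_nonneg _)
      _ = ‖q*x‖ := one_mul _
      _ < 1 := ha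
  have hqqxinv : q * (q*x)⁻¹ = x⁻¹ := by
    field_simp
  have hb2 : ‖q*(q*x)⁻¹‖ < 1 := by
    rw [hqqxinv, norm_inv, hxnorm, ← Real.exp_neg]
    simp only [neg_neg]
    exact hexp_lt _ h2
  -- imaginary part of the shift
  have him : (2*(Real.pi:ℂ)*τ).im = 2*Real.pi*τ.im := by
    simp [Complex.mul_im, Complex.mul_re]
  have hfz := hf z (by rw [abs_lt]; constructor <;> linarith)
  have hfzw := hf (z + 2*Real.pi*τ) (by
    rw [Complex.add_im, him, abs_lt]
    constructor <;> linarith)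
  -- sin rewriting
  have hsin : ∀ (w : ℂ) (n : ℕ), Complex.sin (((n:ℂ)+1)*w) =
      ((Complex.exp (w*I))⁻¹^(n+1) - (Complex.exp (w*I))^(n+1)) * I / 2 := by
    intro w n
    rw [Complex.sin]
    have e1 : Complex.exp ((((n:ℂ)+1)*w) * I) = (Complex.exp (w*I))^(n+1) := by
      rw [← Complex.exp_nat_mul]
      congr 1
      push_cast
      ring
    have e2 : Complex.exp (-(((n:ℂ)+1)*w) * I) = (Complex.exp (w*I))⁻¹^(n+1) := by
      rw [inv_pow, ← e1, ← Complex.exp_neg]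
      congr 1
      ring
    rw [e1, e2]
  have hseries : ∀ (w : ℂ), (∑' n : ℕ, q ^ (n+1) * Complex.sin (((n:ℂ)+1) * w) / (1 - q ^ (n+1)))
      = I/2 * ∑' n : ℕ, q^(n+1) * (((Complex.exp (w*I))⁻¹)^(n+1) - (Complex.exp (w*I))^(n+1)) / (1 - q^(n+1)) := by
    intro w
    rw [← tsum_mul_left]
    refine tsum_congr fun n => ?_
    rw [hsin w n]
    ring
  -- cot values
  have hxne1 : x ≠ 1 := by
    intro h
    rw [h, norm_one] at hx1
    exact lt_irrefl 1 hx1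
  have hqxne1 : q*x ≠ 1 := by
    intro h
    rw [h, norm_one] at ha
    exact lt_irrefl 1 ha
  have hcot1 : Complex.cot (z/2) = I * (x+1) / (x-1) := by
    rw [cot_half (by rw [← hx']; exact hxne1), ← hx']
  have hcot2 : Complex.cot ((z + 2*Real.pi*τ)/2) = I * (q*x+1) / (q*x-1) := by
    rw [cot_half (by rw [← hqx_eq]; exact hqxne1), ← hqx_eq]
  -- assemble
  rw [hfzw, hfz, hcot1, hcot2, hseries, hseries, ← hqx_eq, ← hx',
    key_swap hqlt ha hb, key_swap hqlt ha2 hb2]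
  have htel := telescope hqlt hq0 ha hx1
  set A : ℂ := ∑' m : ℕ, (q^(m+1)*x⁻¹/(1 - q^(m+1)*x⁻¹) - q^(m+1)*x/(1 - q^(m+1)*x)) with hA
  set B : ℂ := ∑' m : ℕ, (q^(m+1)*(q*x)⁻¹/(1 - q^(m+1)*(q*x)⁻¹) - q^(m+1)*(q*x)/(1 - q^(m+1)*(q*x))) with hB
  have hBA : B = A + (x⁻¹/(1-x⁻¹) + q*x/(1-q*x)) := by
    rw [← htel]; ring
  rw [hBA]
  have hxm1 : x - 1 ≠ 0 := sub_ne_zero.mpr hxne1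
  have hqxm1 : q*x - 1 ≠ 0 := sub_ne_zero.mpr hqxne1
  have h1mqx : 1 - q*x ≠ 0 := sub_ne_zero.mpr (Ne.symm hqxne1)
  have h1mxi : 1 - x⁻¹ ≠ 0 := by
    intro h
    exact hxne1 (inv_eq_one.mp (sub_eq_zero.mp h).symm)
  field_simp
  ring

theorem ramanujan_f_quasiperiodic (τ : ℂ) (hτ : 0 < τ.im)
    (q : ℂ) (hq : q = Complex.exp (2 * Real.pi * Complex.I * τ))
    (f : ℂ → ℂ)
    (hmero : MeromorphicOn f Set.univ)
    (hf : ∀ θ : ℂ, |θ.im| < 2 * Real.pi * τ.im →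
      f θ = 1/4 * Complex.cot (θ/2)
        + ∑' n : ℕ, q ^ (n+1) * Complex.sin ((n+1) * θ) / (1 - q ^ (n+1)))
    (hpoles : ∀ θ : ℂ, (¬ ∃ m n : ℤ, θ = 2 * Real.pi * m + 2 * Real.pi * n * τ) →
      AnalyticAt ℂ f θ)
    (θ : ℂ)
    (hθ : ¬ ∃ m n : ℤ, θ = 2 * Real.pi * m + 2 * Real.pi * n * τ) :
    f (θ + 2 * Real.pi * τ) = f θ - Complex.I / 2 := by
  have hpi : (0:ℝ) < Real.pi := Real.pi_pos
  set L : Set ℂ := {z | ∃ m n : ℤ, z = 2 * Real.pi * m + 2 * Real.pi * n * τ} with hL'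
  set g : ℂ → ℂ := fun z => f (z + 2 * Real.pi * τ) - f z + Complex.I/2 with hg'
  have hLc : L.Countable := by
    have : L ⊆ Set.range (fun p : ℤ × ℤ => (2 * Real.pi * p.1 + 2 * Real.pi * p.2 * τ : ℂ)) := by
      rintro z ⟨m, n, rfl⟩
      exact ⟨(m, n), rfl⟩
    exact (Set.countable_range _).mono this
  have hUconn : IsPreconnected Lᶜ :=
    (hLc.isPathConnected_compl_of_one_lt_rank
      (by rw [rank_real_complex]; norm_num)).isConnected.isPreconnected
  have hshift : ∀ z : ℂ, z ∈ Lᶜ → z + 2 * Real.pi * τ ∈ Lᶜ := by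
    intro z hz hmem
    obtain ⟨m, n, he⟩ := hmem
    exact hz ⟨m, n - 1, by push_cast; linear_combination he⟩
  have hgan : AnalyticOnNhd ℂ g Lᶜ := by
    intro z hz
    have h1 : AnalyticAt ℂ (fun y : ℂ => f (y + 2 * Real.pi * τ)) z := by
      have hin : AnalyticAt ℂ (fun y : ℂ => y + 2 * Real.pi * τ) z :=
        analyticAt_id.add analyticAt_const
      have := AnalyticAt.comp (𝕜 := ℂ) (g := f)
        (f := fun y : ℂ => y + 2 * Real.pi * τ) (x := z) (hpoles _ (hshift z hz)) hin
      exact this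
    exact (h1.sub (hpoles z hz)).add analyticAt_const
  set z₀ : ℂ := -(Real.pi : ℂ) * τ with hz₀'
  have hz₀im : z₀.im = -(Real.pi * τ.im) := by
    simp [hz₀', Complex.mul_im, Complex.mul_re]
  have hz₀U : z₀ ∈ Lᶜ := by
    intro hmem
    obtain ⟨m, n, he⟩ := hmem
    have him := congrArg Complex.im he
    have h2 : ((2 * Real.pi * (m:ℂ) + 2 * Real.pi * (n:ℂ) * τ).im : ℝ)
        = 2 * Real.pi * n * τ.im := by
      simp [Complex.add_im, Complex.mul_im, Complex.mul_re]
    rw [hz₀im, h2] at him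
    have hτne : τ.im ≠ 0 := ne_of_gt hτ
    have : -Real.pi = 2 * Real.pi * n := by
      have := mul_right_cancel₀ hτne (by linarith [him] : (-Real.pi) * τ.im = (2 * Real.pi * n) * τ.im)
      linarith [this]
    have hn : (2 * (n:ℝ) + 1) * Real.pi = 0 := by linarith
    have : (2 * (n:ℝ) + 1) = 0 := by
      rcases mul_eq_zero.mp hn with h | h
      · exact h
      · exact absurd h (ne_of_gt hpi)
    have : (2 * n + 1 : ℤ) = 0 := by exact_mod_cast this
    omega
  have hstrip : IsOpen {z : ℂ | z.im ∈ Set.Ioo (-(2 * Real.pi * τ.im)) 0} :=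
    isOpen_Ioo.preimage Complex.continuous_im
  have hz₀S : z₀ ∈ {z : ℂ | z.im ∈ Set.Ioo (-(2 * Real.pi * τ.im)) 0} := by
    simp only [Set.mem_setOf_eq, hz₀im, Set.mem_Ioo]
    constructor <;> nlinarith
  have hev : g =ᶠ[nhds z₀] 0 := by
    apply Filter.eventuallyEq_of_mem (hstrip.mem_nhds hz₀S)
    intro z hz
    have := strip_id τ hτ q hq f hf z hz.1 hz.2
    simp only [hg', Pi.zero_apply]
    rw [this]
    ring
  have := AnalyticOnNhd.eqOn_zero_of_preconnected_of_eventuallyEq_zero hgan hUconn hz₀U hev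
  have hθU : θ ∈ Lᶜ := hθ
  have hval := this hθU
  simp only [hg', Pi.zero_apply] at hval
  linear_combination hval
end

section
/- With S(θ) = Σ_{n≥0} sin((2n+1)θ/2)/sinh((2n+1)y/2), C(θ) = Σ_{n≥0} cos((2n+1)θ/2)/cosh((2n+1)y/2), C₁(θ) = 1/2 + Σ_{n≥1} cos(nθ)/cosh(ny), Ramanujan's differentiation formula dS/dθ = C·C₁ holds. -/
open Real

noncomputable def Sfun (y θ : ℝ) : ℝ :=
  ∑' n : ℕ, Real.sin ((2 * n + 1) * θ / 2) / Real.sinh ((2 * n + 1) * y / 2)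

noncomputable def Cfun (y θ : ℝ) : ℝ :=
  ∑' n : ℕ, Real.cos ((2 * n + 1) * θ / 2) / Real.cosh ((2 * n + 1) * y / 2)

noncomputable def C1fun (y θ : ℝ) : ℝ :=
  1/2 + ∑' n : ℕ, Real.cos ((n + 1) * θ) / Real.cosh ((n + 1) * y)

open Real Filter Topology

namespace Ram

lemma half_exp_le_cosh (x : ℝ) : exp x / 2 ≤ cosh x := by
  rw [Real.cosh_eq]; have := (Real.exp_pos (-x)).le; linarith

lemma one_div_cosh_le (x : ℝ) : 1 / cosh x ≤ 2 * exp (-|x|) := by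
  rw [← Real.cosh_abs x]
  have h1 : exp |x| / 2 ≤ cosh |x| := half_exp_le_cosh _
  have h2 : (0:ℝ) < exp |x| / 2 := by positivity
  calc 1 / cosh |x| ≤ 1 / (exp |x| / 2) := one_div_le_one_div_of_le h2 h1
    _ = 2 * exp (-|x|) := by rw [Real.exp_neg]; field_simp

lemma tanh_lt_one (x : ℝ) : tanh x < 1 := by
  rw [Real.tanh_eq_sinh_div_cosh, div_lt_one (Real.cosh_pos x)]
  exact Real.sinh_lt_cosh x

lemma neg_one_lt_tanh (x : ℝ) : -1 < tanh x := by
  have := tanh_lt_one (-x); rw [Real.tanh_neg] at this; linarith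

lemma one_sub_tanh_le (x : ℝ) : 1 - tanh x ≤ 2 * exp (-(2*x)) := by
  rcases le_or_gt 0 x with hx | hx
  · have hc := Real.cosh_pos x
    have h1 : 1 - tanh x = exp (-x) / cosh x := by
      rw [Real.tanh_eq_sinh_div_cosh, ← Real.cosh_sub_sinh x]; field_simp
    have h2 : cosh x ≥ exp x / 2 := half_exp_le_cosh x
    rw [h1]
    have h3 : exp (-x) / cosh x ≤ exp (-x) / (exp x / 2) := by
      apply div_le_div_of_nonneg_left (Real.exp_pos _).le (by positivity) h2
    calc exp (-x) / cosh x ≤ exp (-x) / (exp x / 2) := h3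
      _ = 2 * exp (-(2*x)) := by
          rw [div_div_eq_mul_div, div_eq_iff (Real.exp_pos _).ne', mul_assoc, ← Real.exp_add]
          ring_nf
  · have h1 : 1 - tanh x < 2 := by have := neg_one_lt_tanh x; linarith
    have h2 : (1:ℝ) ≤ exp (-(2*x)) := by rw [Real.one_le_exp_iff]; linarith
    nlinarith

lemma one_add_tanh_le (x : ℝ) : 1 + tanh x ≤ 2 * exp (2*x) := by
  have := one_sub_tanh_le (-x); rw [Real.tanh_neg] at this
  simpa [neg_neg, mul_neg, sub_neg_eq_add] using this

lemma tendsto_tanh_atTop : Tendsto tanh atTop (𝓝 1) := by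
  have hlow : Tendsto (fun x : ℝ => 1 - 2 * exp (-(2*x))) atTop (𝓝 1) := by
    have : Tendsto (fun x : ℝ => exp (-(2*x))) atTop (𝓝 0) := by
      apply Real.tendsto_exp_atBot.comp
      rw [tendsto_atTop_atBot]
      exact fun b => ⟨-b/2, fun a ha => by linarith⟩
    simpa using (tendsto_const_nhds.sub (this.const_mul 2))
  refine tendsto_of_tendsto_of_tendsto_of_le_of_le' hlow tendsto_const_nhds ?_ ?_
  · filter_upwards with x
    have := one_sub_tanh_le x; linarith
  · filter_upwards with x; exact (tanh_lt_one x).le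

section
variable (y : ℝ)

/-- `u y m = tanh (m y / 2)` for integer `m`. -/
noncomputable def u (m : ℤ) : ℝ := tanh ((m : ℝ) * y / 2)

lemma u_neg (m : ℤ) : u y (-m) = - u y m := by
  have : ((-m : ℤ) : ℝ) * y / 2 = -(((m:ℤ):ℝ) * y / 2) := by push_cast; ring
  rw [u, u, this, Real.tanh_neg]

/-- the summand in the tanh series -/
noncomputable def tt (j n : ℕ) : ℝ :=
  u y ((2*j+1) - 2*(n+1)) + u y ((2*j+1) + 2*(n+1))

variable {y} (hy : 0 < y)

include hy in
lemma tt_bound (j n : ℕ) :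
    |tt y j n| ≤ (4 * exp ((2*j+1)*y)) * exp (-(n:ℝ)*y) := by
  have h1 : 0 ≤ 1 + u y ((2*j+1) - 2*(n+1)) := by
    have := neg_one_lt_tanh (((2*(j:ℝ)+1) - 2*(n+1)) * y / 2)
    simp only [u]; push_cast; linarith
  have h2 : 0 ≤ 1 - u y ((2*j+1) + 2*(n+1)) := by
    have := tanh_lt_one (((2*(j:ℝ)+1) + 2*(n+1)) * y / 2)
    simp only [u]; push_cast; linarith
  have e1 : 1 + u y ((2*j+1) - 2*(n+1)) ≤ 2 * exp (((2*(j:ℝ)+1) - 2*(n+1)) * y) := by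
    have := one_add_tanh_le (((2*(j:ℝ)+1) - 2*(n+1)) * y / 2)
    simp only [u]; push_cast
    convert this using 3; ring
  have e2 : 1 - u y ((2*j+1) + 2*(n+1)) ≤ 2 * exp (-(((2*(j:ℝ)+1) + 2*(n+1)) * y)) := by
    have := one_sub_tanh_le (((2*(j:ℝ)+1) + 2*(n+1)) * y / 2)
    simp only [u]; push_cast
    convert this using 3; ring
  have habs : |tt y j n| ≤ (1 + u y ((2*j+1) - 2*(n+1))) + (1 - u y ((2*j+1) + 2*(n+1))) := by
    rw [tt, abs_le]; constructor <;> nlinarith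
  have b1 : 2 * exp (((2*(j:ℝ)+1) - 2*(n+1)) * y) ≤ 2 * exp ((2*(j:ℝ)+1)*y) * exp (-(n:ℝ)*y) := by
    rw [mul_assoc, ← Real.exp_add]
    have : ((2*(j:ℝ)+1) - 2*(n+1)) * y ≤ (2*(j:ℝ)+1)*y + -(n:ℝ)*y := by nlinarith [hy.le]
    exact mul_le_mul_of_nonneg_left (Real.exp_le_exp.mpr this) (by norm_num)
  have b2 : 2 * exp (-(((2*(j:ℝ)+1) + 2*(n+1)) * y)) ≤ 2 * exp ((2*(j:ℝ)+1)*y) * exp (-(n:ℝ)*y) := by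
    rw [mul_assoc, ← Real.exp_add]
    have : -(((2*(j:ℝ)+1) + 2*(n+1)) * y) ≤ (2*(j:ℝ)+1)*y + -(n:ℝ)*y := by nlinarith [hy.le]
    exact mul_le_mul_of_nonneg_left (Real.exp_le_exp.mpr this) (by norm_num)
  calc |tt y j n| ≤ _ := habs
    _ ≤ 2 * exp ((2*(j:ℝ)+1)*y) * exp (-(n:ℝ)*y) + 2 * exp ((2*(j:ℝ)+1)*y) * exp (-(n:ℝ)*y) := by
        have := le_trans e1 b1; have := le_trans e2 b2; linarith
    _ = (4 * exp ((2*j+1)*y)) * exp (-(n:ℝ)*y) := by push_cast; ring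

include hy in
lemma summable_exp_neg : Summable (fun n : ℕ => exp (-(n:ℝ)*y)) := by
  have : ∀ n : ℕ, exp (-(n:ℝ)*y) = (exp (-y))^n := by
    intro n; rw [← Real.exp_nat_mul]; ring_nf
  rw [funext this]
  exact summable_geometric_of_lt_one (Real.exp_pos _).le
    (Real.exp_lt_one_iff.mpr (by linarith))

include hy in
lemma summable_tt (j : ℕ) : Summable (tt y j) := by
  apply Summable.of_abs
  apply Summable.of_nonneg_of_le (fun n => abs_nonneg _) (tt_bound hy j)
  exact (summable_exp_neg hy).mul_left _

end

section
variable {y : ℝ} (hy : 0 < y)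

lemma sum_u_zero (y : ℝ) (j : ℕ) :
    ∑ p ∈ Finset.range (2*j+2), u y ((2*j+1 : ℤ) - 2*p) = 0 := by
  set f : ℕ → ℝ := fun p => u y ((2*j+1 : ℤ) - 2*p) with hf
  have key : ∀ p ∈ Finset.range (2*j+2), f ((2*j+2) - 1 - p) = - f p := by
    intro p hp
    simp only [Finset.mem_range] at hp
    have hcast : (((2*j+2) - 1 - p : ℕ) : ℤ) = 2*j+1 - p := by omega
    simp only [hf]
    rw [hcast]
    have harg : (2*j+1 : ℤ) - 2*(2*j+1 - p) = -((2*j+1 : ℤ) - 2*p) := by ring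
    rw [harg, u_neg]
  have h1 := Finset.sum_range_reflect f (2*j+2)
  rw [Finset.sum_congr rfl key] at h1
  rw [Finset.sum_neg_distrib] at h1
  linarith [h1]

lemma P_eq (y : ℝ) (j N : ℕ) :
    u y (2*j+1) + ∑ n ∈ Finset.range (N + (2*j+1)), tt y j n
      = ∑ i ∈ Finset.range (2*j+1), u y ((2*j+1 : ℤ) + 2*((N:ℤ) + 1 + i)) := by
  induction N with
  | zero =>
    have split : ∑ n ∈ Finset.range (0 + (2*j+1)), tt y j n
        = (∑ n ∈ Finset.range (2*j+1), u y ((2*j+1 : ℤ) - 2*((n:ℤ)+1)))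
          + ∑ n ∈ Finset.range (2*j+1), u y ((2*j+1 : ℤ) + 2*((((0:ℕ)):ℤ) + 1 + (n:ℤ))) := by
      rw [Nat.zero_add, ← Finset.sum_add_distrib]
      refine Finset.sum_congr rfl (fun n _ => ?_)
      simp only [tt]
      have A2 : u y ((2*(j:ℤ)+1) + 2*((n:ℤ)+1))
          = u y ((2*j+1 : ℤ) + 2*((((0:ℕ)):ℤ) + 1 + (n:ℤ))) :=
        congrArg (u y) (by push_cast; ring)
      rw [A2]
    rw [show (Nat.zero) + (2*j+1) = 0 + (2*j+1) from rfl] at *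
    rw [split]
    have h0 : u y (2*j+1) + ∑ n ∈ Finset.range (2*j+1), u y ((2*j+1 : ℤ) - 2*((n:ℤ)+1)) = 0 := by
      have hz := sum_u_zero y j
      have hsplit := Finset.sum_range_succ' (fun p : ℕ => u y ((2*j+1 : ℤ) - 2*(p:ℤ))) (2*j+1)
      have e : (2*j+1)+1 = 2*j+2 := by omega
      rw [e] at hsplit
      rw [hsplit] at hz
      simp only [Nat.cast_zero, mul_zero, sub_zero] at hz
      have e2 : ∀ n ∈ Finset.range (2*j+1),
          u y ((2*j+1 : ℤ) - 2*(((n+1:ℕ)):ℤ)) = u y ((2*j+1 : ℤ) - 2*((n:ℤ)+1)) :=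
        fun n _ => congrArg (u y) (by push_cast; ring)
      rw [Finset.sum_congr rfl e2] at hz
      linarith [hz]
    have e3 : ∀ n ∈ Finset.range (2*j+1),
        u y ((2*j+1 : ℤ) + 2*((((0:ℕ):ℤ)) + 1 + (n:ℤ)))
          = u y ((2*j+1 : ℤ) + 2*((((0:ℕ)):ℤ) + 1 + (n:ℤ))) := fun n _ => rfl
    linarith [h0]
  | succ N ih =>
    have hr : (N+1) + (2*j+1) = (N + (2*j+1)) + 1 := by omega
    rw [hr, Finset.sum_range_succ, ← add_assoc, ih]
    set f : ℕ → ℝ := fun i => u y ((2*j+1 : ℤ) + 2*((N:ℤ) + 1 + i)) with hfdef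
    have tele : ∑ i ∈ Finset.range (2*j+1), (f (i+1) - f i) = f (2*j+1) - f 0 :=
      Finset.sum_range_sub f (2*j+1)
    have hR : ∑ i ∈ Finset.range (2*j+1), u y ((2*j+1 : ℤ) + 2*(((N+1:ℕ):ℤ) + 1 + i))
        = ∑ i ∈ Finset.range (2*j+1), f (i+1) := by
      refine Finset.sum_congr rfl (fun i _ => ?_)
      simp only [hfdef]
      exact congrArg (u y) (by push_cast; ring)
    rw [hR]
    have hsum : ∑ i ∈ Finset.range (2*j+1), f (i+1)
        = (∑ i ∈ Finset.range (2*j+1), f i) + (f (2*j+1) - f 0) := by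
      rw [← tele, ← Finset.sum_add_distrib]
      apply Finset.sum_congr rfl; intro i _; ring
    rw [hsum]
    have htt : tt y j (N + (2*j+1)) = f (2*j+1) - f 0 := by
      rw [tt, hfdef]
      have a1 : ((2*j+1 : ℤ)) - 2*(((N + (2*j+1) : ℕ) : ℤ)+1)
          = -((2*j+1 : ℤ) + 2*((N:ℤ) + 1 + ((0:ℕ):ℤ))) := by push_cast; ring
      have a2 : ((2*j+1 : ℤ)) + 2*(((N + (2*j+1) : ℕ) : ℤ)+1)
          = (2*j+1 : ℤ) + 2*((N:ℤ) + 1 + (((2*j+1:ℕ)):ℤ)) := by push_cast; ring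
      rw [a1, a2, u_neg]; ring
    rw [htt]

include hy in
lemma tendsto_Q (j : ℕ) :
    Tendsto (fun N : ℕ => ∑ i ∈ Finset.range (2*j+1), u y ((2*j+1 : ℤ) + 2*((N:ℤ) + 1 + i)))
      atTop (𝓝 (2*(j:ℝ)+1)) := by
  have hlim : (2*(j:ℝ)+1) = ∑ _i ∈ Finset.range (2*j+1), (1:ℝ) := by
    rw [Finset.sum_const, Finset.card_range, nsmul_eq_mul, mul_one]; push_cast; ring
  rw [hlim]
  apply tendsto_finset_sum
  intro i _
  have harg : Tendsto (fun N : ℕ => (((2*j+1 : ℤ) + 2*((N:ℤ) + 1 + i) : ℤ) : ℝ) * y / 2) atTop atTop := by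
    apply tendsto_atTop_mono (f := fun N : ℕ => (N:ℝ) * y)
    · intro N; push_cast
      nlinarith [hy.le, Nat.cast_nonneg (α := ℝ) N, Nat.cast_nonneg (α := ℝ) i,
        Nat.cast_nonneg (α := ℝ) j]
    · exact Tendsto.atTop_mul_const hy tendsto_natCast_atTop_atTop
  exact tendsto_tanh_atTop.comp harg

include hy in
lemma hasSum_tt (j : ℕ) :
    HasSum (tt y j) ((2*(j:ℝ)+1) - u y (2*j+1)) := by
  have hsum := summable_tt hy j
  have h1 : HasSum (tt y j) (∑' n, tt y j n) := hsum.hasSum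
  have h2 : Tendsto (fun N : ℕ => ∑ n ∈ Finset.range N, tt y j n) atTop (𝓝 (∑' n, tt y j n)) :=
    h1.tendsto_sum_nat
  have h3 : Tendsto (fun N : ℕ => u y (2*j+1) + ∑ n ∈ Finset.range (N + (2*j+1)), tt y j n)
      atTop (𝓝 (u y (2*j+1) + ∑' n, tt y j n)) := by
    apply Tendsto.const_add
    exact h2.comp (tendsto_add_atTop_nat (2*j+1))
  have h4 : Tendsto (fun N : ℕ => u y (2*j+1) + ∑ n ∈ Finset.range (N + (2*j+1)), tt y j n)
      atTop (𝓝 (2*(j:ℝ)+1)) := by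
    have := tendsto_Q hy j
    apply this.congr
    intro N; exact (P_eq y j N).symm
  have := tendsto_nhds_unique h3 h4
  have heq : (∑' n, tt y j n) = (2*(j:ℝ)+1) - u y (2*j+1) := by linarith
  rwa [heq] at h1

end

section
variable (y : ℝ)

/-- summand of the cosh-product series -/
noncomputable def g (j n : ℕ) : ℝ :=
  1/(cosh (((2*(j:ℝ)+1) - 2*((n:ℝ)+1))*y/2) * cosh (((n:ℝ)+1)*y))
    + 1/(cosh (((2*(j:ℝ)+1) + 2*((n:ℝ)+1))*y/2) * cosh (((n:ℝ)+1)*y))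

lemma tanh_add_tanh (A B : ℝ) :
    sinh (A+B) * (1 / (cosh A * cosh B)) = tanh A + tanh B := by
  rw [Real.sinh_add, Real.tanh_eq_sinh_div_cosh, Real.tanh_eq_sinh_div_cosh]
  have hA := (Real.cosh_pos A).ne'
  have hB := (Real.cosh_pos B).ne'
  field_simp

lemma sinh_mul_g (j n : ℕ) :
    sinh ((2*(j:ℝ)+1)*y/2) * g y j n = tt y j n := by
  have hkey : (2*(j:ℝ)+1)*y/2
      = (((2*(j:ℝ)+1) - 2*((n:ℝ)+1))*y/2) + (((n:ℝ)+1)*y) := by ring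
  have hkey2 : (2*(j:ℝ)+1)*y/2
      = (((2*(j:ℝ)+1) + 2*((n:ℝ)+1))*y/2) + (-(((n:ℝ)+1)*y)) := by ring
  have h1 : sinh ((2*(j:ℝ)+1)*y/2)
      * (1/(cosh (((2*(j:ℝ)+1) - 2*((n:ℝ)+1))*y/2) * cosh (((n:ℝ)+1)*y)))
      = tanh (((2*(j:ℝ)+1) - 2*((n:ℝ)+1))*y/2) + tanh (((n:ℝ)+1)*y) := by
    rw [hkey]; exact tanh_add_tanh _ _
  have h2 : sinh ((2*(j:ℝ)+1)*y/2)
      * (1/(cosh (((2*(j:ℝ)+1) + 2*((n:ℝ)+1))*y/2) * cosh (((n:ℝ)+1)*y)))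
      = tanh (((2*(j:ℝ)+1) + 2*((n:ℝ)+1))*y/2) - tanh (((n:ℝ)+1)*y) := by
    have := tanh_add_tanh (((2*(j:ℝ)+1) + 2*((n:ℝ)+1))*y/2) (-(((n:ℝ)+1)*y))
    rw [← hkey2] at this
    rw [Real.cosh_neg, Real.tanh_neg] at this
    linarith [this]
  have expand : sinh ((2*(j:ℝ)+1)*y/2) * g y j n
      = tanh (((2*(j:ℝ)+1) - 2*((n:ℝ)+1))*y/2)
        + tanh (((2*(j:ℝ)+1) + 2*((n:ℝ)+1))*y/2) := by
    rw [g, mul_add, h1, h2]; ring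
  rw [expand, tt, u, u]
  have c1 : (((2*(j:ℕ)+1 : ℤ) - 2*((n:ℕ)+1) : ℤ) : ℝ) * y / 2
      = ((2*(j:ℝ)+1) - 2*((n:ℝ)+1))*y/2 := by push_cast; ring
  have c2 : (((2*(j:ℕ)+1 : ℤ) + 2*((n:ℕ)+1) : ℤ) : ℝ) * y / 2
      = ((2*(j:ℝ)+1) + 2*((n:ℝ)+1))*y/2 := by push_cast; ring
  rw [c1, c2]

variable {y} (hy : 0 < y)

include hy in
lemma hasSum_g (j : ℕ) :
    HasSum (g y j)
      ((2*(j:ℝ)+1) / sinh ((2*(j:ℝ)+1)*y/2) - 1 / cosh ((2*(j:ℝ)+1)*y/2)) := by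
  have hs : 0 < sinh ((2*(j:ℝ)+1)*y/2) := by
    apply Real.sinh_pos_iff.mpr
    positivity
  have h1 := (hasSum_tt hy j).div_const (sinh ((2*(j:ℝ)+1)*y/2))
  have h2 : ∀ n, tt y j n / sinh ((2*(j:ℝ)+1)*y/2) = g y j n := by
    intro n; rw [← sinh_mul_g y j n]; field_simp
  have h3 : ((2*(j:ℝ)+1) - u y (2*j+1)) / sinh ((2*(j:ℝ)+1)*y/2)
      = (2*(j:ℝ)+1) / sinh ((2*(j:ℝ)+1)*y/2) - 1 / cosh ((2*(j:ℝ)+1)*y/2) := by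
    rw [u]
    have hc : (((2*(j:ℕ)+1 : ℤ)) : ℝ) * y / 2 = (2*(j:ℝ)+1)*y/2 := by push_cast; ring
    rw [hc, Real.tanh_eq_sinh_div_cosh, sub_div]
    congr 1
    rw [div_div, div_eq_div_iff (by positivity) (Real.cosh_pos _).ne']
    ring
  rw [← h3]
  exact h1.congr_fun (fun n => (h2 n).symm)

end

section
variable (y θ : ℝ)

noncomputable def cc (j : ℕ) : ℝ := cos ((2*(j:ℝ)+1)*θ/2)

noncomputable def Dd (m n : ℕ) : ℝ := 1/(cosh ((2*(m:ℝ)+1)*y/2) * cosh (((n:ℝ)+1)*y))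

noncomputable def q1 (j n : ℕ) : ℝ :=
  1/(cosh (((2*(j:ℝ)+1) - 2*((n:ℝ)+1))*y/2) * cosh (((n:ℝ)+1)*y))

noncomputable def q2 (j n : ℕ) : ℝ :=
  1/(cosh (((2*(j:ℝ)+1) + 2*((n:ℝ)+1))*y/2) * cosh (((n:ℝ)+1)*y))

lemma g_eq (j n : ℕ) : g y j n = q1 y j n + q2 y j n := rfl

variable {y}

lemma inv_cosh_mul_le {A B t : ℝ} (ht : t ≤ |A| + |B|) :
    1/(cosh A * cosh B) ≤ 4 * exp (-t) := by
  have h1 : 1/(cosh A * cosh B) = (1/cosh A) * (1/cosh B) := by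
    rw [div_mul_div_comm, one_mul]
  rw [h1]
  have hA := one_div_cosh_le A
  have hB := one_div_cosh_le B
  have hpA : (0:ℝ) < 1/cosh A := by positivity
  have hpB : (0:ℝ) < 1/cosh B := by positivity
  calc (1/cosh A) * (1/cosh B) ≤ (2 * exp (-|A|)) * (2 * exp (-|B|)) := by
        apply mul_le_mul hA hB hpB.le (by positivity)
    _ = 4 * exp (-(|A| + |B|)) := by rw [neg_add, Real.exp_add]; ring
    _ ≤ 4 * exp (-t) := by
        have := Real.exp_le_exp.mpr (neg_le_neg ht)
        linarith

variable (hy : 0 < y)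

include hy in
lemma q1_le (j n : ℕ) :
    q1 y j n ≤ 4 * (exp (-(j:ℝ)*(y/2)) * exp (-(n:ℝ)*(y/2))) := by
  rw [q1]
  have hjn : (j:ℝ)*(y/2) + (n:ℝ)*(y/2)
      ≤ |((2*(j:ℝ)+1) - 2*((n:ℝ)+1))*y/2| + |((n:ℝ)+1)*y| := by
    have hj : (0:ℝ) ≤ (j:ℝ) := Nat.cast_nonneg j
    have hn : (0:ℝ) ≤ (n:ℝ) := Nat.cast_nonneg n
    have hB : |((n:ℝ)+1)*y| = ((n:ℝ)+1)*y := abs_of_nonneg (by positivity)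
    rcases le_or_gt (j:ℝ) (n:ℝ) with h | h
    · have h1 : -( ((2*(j:ℝ)+1) - 2*((n:ℝ)+1))*y/2 ) ≤ |((2*(j:ℝ)+1) - 2*((n:ℝ)+1))*y/2| :=
        neg_le_abs _
      rw [hB]; nlinarith
    · have h1 : ((2*(j:ℝ)+1) - 2*((n:ℝ)+1))*y/2 ≤ |((2*(j:ℝ)+1) - 2*((n:ℝ)+1))*y/2| :=
        le_abs_self _
      rw [hB]; nlinarith
  have := inv_cosh_mul_le hjn
  rwa [neg_add, Real.exp_add, ← neg_mul, ← neg_mul] at this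

include hy in
lemma q2_le (j n : ℕ) :
    q2 y j n ≤ 4 * (exp (-(j:ℝ)*(y/2)) * exp (-(n:ℝ)*(y/2))) := by
  rw [q2]
  have hjn : (j:ℝ)*(y/2) + (n:ℝ)*(y/2)
      ≤ |((2*(j:ℝ)+1) + 2*((n:ℝ)+1))*y/2| + |((n:ℝ)+1)*y| := by
    have hj : (0:ℝ) ≤ (j:ℝ) := Nat.cast_nonneg j
    have hn : (0:ℝ) ≤ (n:ℝ) := Nat.cast_nonneg n
    rw [abs_of_nonneg (by positivity : (0:ℝ) ≤ ((2*(j:ℝ)+1) + 2*((n:ℝ)+1))*y/2),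
      abs_of_nonneg (by positivity : (0:ℝ) ≤ ((n:ℝ)+1)*y)]
    nlinarith
  have := inv_cosh_mul_le hjn
  rwa [neg_add, Real.exp_add, ← neg_mul, ← neg_mul] at this

include hy in
lemma Dd_le (m n : ℕ) :
    Dd y m n ≤ 4 * (exp (-(m:ℝ)*(y/2)) * exp (-(n:ℝ)*(y/2))) := by
  rw [Dd]
  have hjn : (m:ℝ)*(y/2) + (n:ℝ)*(y/2)
      ≤ |(2*(m:ℝ)+1)*y/2| + |((n:ℝ)+1)*y| := by
    have hj : (0:ℝ) ≤ (m:ℝ) := Nat.cast_nonneg m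
    have hn : (0:ℝ) ≤ (n:ℝ) := Nat.cast_nonneg n
    rw [abs_of_nonneg (by positivity : (0:ℝ) ≤ (2*(m:ℝ)+1)*y/2),
      abs_of_nonneg (by positivity : (0:ℝ) ≤ ((n:ℝ)+1)*y)]
    nlinarith
  have := inv_cosh_mul_le hjn
  rwa [neg_add, Real.exp_add, ← neg_mul, ← neg_mul] at this

include hy in
lemma summable_prod_exp :
    Summable (fun p : ℕ×ℕ => exp (-(p.1:ℝ)*(y/2)) * exp (-(p.2:ℝ)*(y/2))) := by
  have h := summable_exp_neg (half_pos hy)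
  exact h.mul_of_nonneg h (fun n => (Real.exp_pos _).le) (fun n => (Real.exp_pos _).le)

include hy in
lemma summable_of_expbound {f : ℕ×ℕ → ℝ} (K : ℝ)
    (h : ∀ p : ℕ×ℕ, |f p| ≤ K * (exp (-(p.1:ℝ)*(y/2)) * exp (-(p.2:ℝ)*(y/2)))) :
    Summable f := by
  apply Summable.of_abs
  apply Summable.of_nonneg_of_le (fun p => abs_nonneg _) h
  exact (summable_prod_exp hy).mul_left K

include hy in
lemma summable_single {f : ℕ → ℝ} (K : ℝ)
    (h : ∀ n : ℕ, |f n| ≤ K * exp (-(n:ℝ)*(y/2))) : Summable f := by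
  apply Summable.of_abs
  apply Summable.of_nonneg_of_le (fun p => abs_nonneg _) h
  exact (summable_exp_neg (half_pos hy)).mul_left K

end

section

/-- parametrize region `snd < fst` of `ℕ × ℕ` -/
def eLT : ℕ×ℕ ≃ {p : ℕ×ℕ // p ∈ {p : ℕ×ℕ | p.2 < p.1}} where
  toFun q := ⟨(q.1+q.2+1, q.2), by simp only [Set.mem_setOf_eq]; omega⟩
  invFun x := (x.1.1 - x.1.2 - 1, x.1.2)
  left_inv q := by
    obtain ⟨a,b⟩ := q
    simp only [Prod.mk.injEq]
    exact ⟨by omega, trivial⟩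
  right_inv x := by
    obtain ⟨⟨a,b⟩,h⟩ := x
    simp only [Set.mem_setOf_eq] at h
    apply Subtype.ext
    simp only [Prod.mk.injEq]
    exact ⟨by omega, trivial⟩

/-- parametrize region `fst ≤ snd` of `ℕ × ℕ` -/
def eLE : ℕ×ℕ ≃ {p : ℕ×ℕ // p ∈ ({p : ℕ×ℕ | p.2 < p.1}ᶜ : Set (ℕ×ℕ))} where
  toFun q := ⟨(q.1, q.1+q.2), by simp only [Set.mem_compl_iff, Set.mem_setOf_eq]; omega⟩
  invFun x := (x.1.1, x.1.2 - x.1.1)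
  left_inv q := by
    obtain ⟨a,b⟩ := q
    simp only [Prod.mk.injEq]
    exact ⟨trivial, by omega⟩
  right_inv x := by
    obtain ⟨⟨a,b⟩,h⟩ := x
    simp only [Set.mem_compl_iff, Set.mem_setOf_eq, not_lt] at h
    apply Subtype.ext
    simp only [Prod.mk.injEq]
    exact ⟨trivial, by omega⟩

lemma tsum_split (f : ℕ×ℕ → ℝ) (hf : Summable f) :
    ∑' p, f p = (∑' q : ℕ×ℕ, f (q.1+q.2+1, q.2)) + ∑' q : ℕ×ℕ, f (q.1, q.1+q.2) := by
  rw [← Summable.tsum_subtype_add_tsum_subtype_compl hf {p : ℕ×ℕ | p.2 < p.1}]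
  congr 1
  · rw [← Equiv.tsum_eq eLT (fun x => f x.1)]
    exact tsum_congr (fun q => rfl)
  · rw [← Equiv.tsum_eq eLE (fun x => f x.1)]
    exact tsum_congr (fun q => rfl)

end

section
variable (y θ : ℝ)

noncomputable def L1 (p : ℕ×ℕ) : ℝ := cc θ p.1 * q1 y p.1 p.2
noncomputable def L2 (p : ℕ×ℕ) : ℝ := cc θ p.1 * q2 y p.1 p.2
noncomputable def h1 (p : ℕ×ℕ) : ℝ := cc θ (p.1+p.2+1) * Dd y p.1 p.2
noncomputable def h2 (p : ℕ×ℕ) : ℝ :=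
  cos (((2*(p.1:ℝ)+1) - 2*((p.2:ℝ)+1))*θ/2) * Dd y p.1 p.2

lemma M1 (q : ℕ×ℕ) : L1 y θ (q.1+q.2+1, q.2) = h1 y θ q := by
  rw [L1, h1, q1, Dd]
  have e : ((2*(((q.1+q.2+1 : ℕ)):ℝ)+1) - 2*((q.2:ℝ)+1))*y/2 = (2*(q.1:ℝ)+1)*y/2 := by
    push_cast; ring
  rw [e]

lemma M2 (q : ℕ×ℕ) : L2 y θ q = h2 y θ (q.1+q.2+1, q.2) := by
  rw [L2, h2, q2, Dd, cc]
  have e1 : ((2*(((q.1+q.2+1 : ℕ)):ℝ)+1) - 2*((q.2:ℝ)+1))*θ/2 = (2*(q.1:ℝ)+1)*θ/2 := by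
    push_cast; ring
  have e2 : (2*(((q.1+q.2+1 : ℕ)):ℝ)+1)*y/2 = ((2*(q.1:ℝ)+1) + 2*((q.2:ℝ)+1))*y/2 := by
    push_cast; ring
  rw [e1, e2]

lemma M3 (q : ℕ×ℕ) : h2 y θ (q.2, q.2+q.1) = L1 y θ (q.1, q.1+q.2) := by
  rw [L1, h2, q1, Dd, cc]
  have e1 : ((2*((q.2:ℕ):ℝ)+1) - 2*((((q.2+q.1 : ℕ)):ℝ)+1))*θ/2 = -((2*(q.1:ℝ)+1)*θ/2) := by
    push_cast; ring
  have e2 : ((2*((q.1:ℕ):ℝ)+1) - 2*((((q.1+q.2 : ℕ)):ℝ)+1))*y/2 = -((2*(q.2:ℝ)+1)*y/2) := by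
    push_cast; ring
  have e3 : ((((q.2+q.1 : ℕ)):ℝ)+1)*y = ((((q.1+q.2 : ℕ)):ℝ)+1)*y := by push_cast; ring
  rw [e1, e2, e3, Real.cos_neg, Real.cosh_neg]

variable {y} (hy : 0 < y)

include hy in
lemma summable_L1 : Summable (L1 y θ) := by
  apply summable_of_expbound hy 4
  intro p
  rw [L1, abs_mul]
  have h1 : |cc θ p.1| ≤ 1 := by rw [cc]; exact Real.abs_cos_le_one _
  have h2 : |q1 y p.1 p.2| = q1 y p.1 p.2 := abs_of_nonneg (by rw [q1]; positivity)
  rw [h2]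
  have h3 := q1_le hy p.1 p.2
  have h4 : (0:ℝ) ≤ q1 y p.1 p.2 := by rw [q1]; positivity
  nlinarith

include hy in
lemma summable_L2 : Summable (L2 y θ) := by
  apply summable_of_expbound hy 4
  intro p
  rw [L2, abs_mul]
  have h1 : |cc θ p.1| ≤ 1 := by rw [cc]; exact Real.abs_cos_le_one _
  have h2 : |q2 y p.1 p.2| = q2 y p.1 p.2 := abs_of_nonneg (by rw [q2]; positivity)
  rw [h2]
  have h3 := q2_le hy p.1 p.2
  have h4 : (0:ℝ) ≤ q2 y p.1 p.2 := by rw [q2]; positivity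
  nlinarith

include hy in
lemma summable_h1 : Summable (h1 y θ) := by
  apply summable_of_expbound hy 4
  intro p
  rw [h1, abs_mul]
  have hc : |cc θ (p.1+p.2+1)| ≤ 1 := by rw [cc]; exact Real.abs_cos_le_one _
  have h2 : |Dd y p.1 p.2| = Dd y p.1 p.2 := abs_of_nonneg (by rw [Dd]; positivity)
  rw [h2]
  have h3 := Dd_le hy p.1 p.2
  have h4 : (0:ℝ) ≤ Dd y p.1 p.2 := by rw [Dd]; positivity
  nlinarith

include hy in
lemma summable_h2 : Summable (h2 y θ) := by
  apply summable_of_expbound hy 4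
  intro p
  rw [h2, abs_mul]
  have hc : |cos (((2*(p.1:ℝ)+1) - 2*((p.2:ℝ)+1))*θ/2)| ≤ 1 := Real.abs_cos_le_one _
  have h2' : |Dd y p.1 p.2| = Dd y p.1 p.2 := abs_of_nonneg (by rw [Dd]; positivity)
  rw [h2']
  have h3 := Dd_le hy p.1 p.2
  have h4 : (0:ℝ) ≤ Dd y p.1 p.2 := by rw [Dd]; positivity
  nlinarith

include hy in
lemma key_exchange :
    (∑' p : ℕ×ℕ, L1 y θ p) + (∑' p : ℕ×ℕ, L2 y θ p)
      = (∑' p : ℕ×ℕ, h1 y θ p) + (∑' p : ℕ×ℕ, h2 y θ p) := by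
  have hL1 := summable_L1 (θ := θ) hy
  have hh2 := summable_h2 (θ := θ) hy
  have split1 := tsum_split (L1 y θ) hL1
  have split2 := tsum_split (h2 y θ) hh2
  have m1 : (∑' q : ℕ×ℕ, L1 y θ (q.1+q.2+1, q.2)) = ∑' p : ℕ×ℕ, h1 y θ p :=
    tsum_congr (fun q => M1 y θ q)
  have m2 : (∑' p : ℕ×ℕ, L2 y θ p) = ∑' q : ℕ×ℕ, h2 y θ (q.1+q.2+1, q.2) :=
    tsum_congr (fun q => M2 y θ q)
  have m3 : (∑' q : ℕ×ℕ, h2 y θ (q.1, q.1+q.2)) = ∑' q : ℕ×ℕ, L1 y θ (q.1, q.1+q.2) := by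
    rw [← Equiv.tsum_eq (Equiv.prodComm ℕ ℕ) (fun q : ℕ×ℕ => h2 y θ (q.1, q.1+q.2))]
    exact tsum_congr (fun q => M3 y θ q)
  rw [split1, split2, m1, m2, m3]
  ring

end

section
variable (y θ : ℝ)

noncomputable def aa (n : ℕ) : ℝ := cos ((2*(n:ℝ)+1)*θ/2) / cosh ((2*(n:ℝ)+1)*y/2)
noncomputable def bb (n : ℕ) : ℝ := cos (((n:ℝ)+1)*θ) / cosh (((n:ℝ)+1)*y)

variable {y} (hy : 0 < y)

include hy in
lemma abs_aa_le (n : ℕ) : |aa y θ n| ≤ 2 * exp (-(n:ℝ)*(y/2)) := by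
  rw [aa, abs_div, abs_of_pos (Real.cosh_pos _)]
  have h1 : |cos ((2*(n:ℝ)+1)*θ/2)| ≤ 1 := Real.abs_cos_le_one _
  have h2 : 1 / cosh ((2*(n:ℝ)+1)*y/2) ≤ 2 * exp (-|(2*(n:ℝ)+1)*y/2|) := one_div_cosh_le _
  have h3 : |(2*(n:ℝ)+1)*y/2| = (2*(n:ℝ)+1)*y/2 := abs_of_nonneg (by positivity)
  have h4 : exp (-((2*(n:ℝ)+1)*y/2)) ≤ exp (-(n:ℝ)*(y/2)) := by
    apply Real.exp_le_exp.mpr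
    have hn : (0:ℝ) ≤ (n:ℝ) := Nat.cast_nonneg n
    nlinarith
  have h5 : (0:ℝ) < cosh ((2*(n:ℝ)+1)*y/2) := Real.cosh_pos _
  calc |cos ((2*(n:ℝ)+1)*θ/2)| / cosh ((2*(n:ℝ)+1)*y/2)
      ≤ 1 / cosh ((2*(n:ℝ)+1)*y/2) := by
        apply div_le_div_of_nonneg_right h1 h5.le |>.trans_eq rfl
    _ ≤ 2 * exp (-|(2*(n:ℝ)+1)*y/2|) := h2
    _ ≤ 2 * exp (-(n:ℝ)*(y/2)) := by rw [h3]; linarith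
  
include hy in
lemma abs_bb_le (n : ℕ) : |bb y θ n| ≤ 2 * exp (-(n:ℝ)*(y/2)) := by
  rw [bb, abs_div, abs_of_pos (Real.cosh_pos _)]
  have h1 : |cos (((n:ℝ)+1)*θ)| ≤ 1 := Real.abs_cos_le_one _
  have h2 : 1 / cosh (((n:ℝ)+1)*y) ≤ 2 * exp (-|((n:ℝ)+1)*y|) := one_div_cosh_le _
  have h3 : |((n:ℝ)+1)*y| = ((n:ℝ)+1)*y := abs_of_nonneg (by positivity)
  have h4 : exp (-(((n:ℝ)+1)*y)) ≤ exp (-(n:ℝ)*(y/2)) := by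
    apply Real.exp_le_exp.mpr
    have hn : (0:ℝ) ≤ (n:ℝ) := Nat.cast_nonneg n
    nlinarith
  have h5 : (0:ℝ) < cosh (((n:ℝ)+1)*y) := Real.cosh_pos _
  calc |cos (((n:ℝ)+1)*θ)| / cosh (((n:ℝ)+1)*y)
      ≤ 1 / cosh (((n:ℝ)+1)*y) := div_le_div_of_nonneg_right h1 h5.le |>.trans_eq rfl
    _ ≤ 2 * exp (-|((n:ℝ)+1)*y|) := h2
    _ ≤ 2 * exp (-(n:ℝ)*(y/2)) := by rw [h3]; linarith

include hy in
lemma summable_abs_aa : Summable (fun n => |aa y θ n|) :=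
  summable_single hy 2 (fun n => by rw [abs_abs]; exact abs_aa_le θ hy n)

include hy in
lemma summable_abs_bb : Summable (fun n => |bb y θ n|) :=
  summable_single hy 2 (fun n => by rw [abs_abs]; exact abs_bb_le θ hy n)

include hy in
lemma summable_F : Summable (fun p : ℕ×ℕ => cc θ p.1/2 * g y p.1 p.2) := by
  apply summable_of_expbound hy 4
  intro p
  rw [abs_mul, g_eq]
  have h1 : |cc θ p.1 / 2| ≤ 1/2 := by
    rw [abs_div, abs_two, cc]
    have := Real.abs_cos_le_one ((2*(p.1:ℝ)+1)*θ/2)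
    linarith
  have h2 : |q1 y p.1 p.2 + q2 y p.1 p.2| = q1 y p.1 p.2 + q2 y p.1 p.2 :=
    abs_of_nonneg (by rw [q1, q2]; positivity)
  rw [h2]
  have h3 := q1_le hy p.1 p.2
  have h4 := q2_le hy p.1 p.2
  have h5 : (0:ℝ) ≤ q1 y p.1 p.2 + q2 y p.1 p.2 := by rw [q1, q2]; positivity
  nlinarith [abs_nonneg (cc θ p.1 / 2)]

include hy in
lemma prod_step :
    ∑' p : ℕ×ℕ, (aa y θ p.1 * bb y θ p.2)
      = 1/2 * ((∑' p : ℕ×ℕ, h1 y θ p) + (∑' p : ℕ×ℕ, h2 y θ p)) := by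
  have point : ∀ p : ℕ×ℕ, aa y θ p.1 * bb y θ p.2 = 1/2 * (h1 y θ p + h2 y θ p) := by
    intro p
    rw [aa, bb, h1, h2, Dd, cc, div_mul_div_comm]
    have hcos : cos ((2*(p.1:ℝ)+1)*θ/2) * cos (((p.2:ℝ)+1)*θ)
        = (cos ((2*((p.1:ℝ)+(p.2:ℝ)+1)+1)*θ/2)
            + cos (((2*(p.1:ℝ)+1) - 2*((p.2:ℝ)+1))*θ/2)) / 2 := by
      have hadd := Real.cos_add ((2*(p.1:ℝ)+1)*θ/2) (((p.2:ℝ)+1)*θ)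
      have hsub := Real.cos_sub ((2*(p.1:ℝ)+1)*θ/2) (((p.2:ℝ)+1)*θ)
      have e1 : (2*(p.1:ℝ)+1)*θ/2 + ((p.2:ℝ)+1)*θ = (2*((p.1:ℝ)+(p.2:ℝ)+1)+1)*θ/2 := by ring
      have e2 : (2*(p.1:ℝ)+1)*θ/2 - ((p.2:ℝ)+1)*θ = ((2*(p.1:ℝ)+1) - 2*((p.2:ℝ)+1))*θ/2 := by
        ring
      rw [e1] at hadd; rw [e2] at hsub
      linarith
    have ecast : cos ((2*(((p.1+p.2+1 : ℕ)):ℝ)+1)*θ/2) = cos ((2*((p.1:ℝ)+(p.2:ℝ)+1)+1)*θ/2) := by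
      apply congrArg; push_cast; ring
    rw [ecast, hcos]
    have hc1 : cosh ((2*(p.1:ℝ)+1)*y/2) > 0 := Real.cosh_pos _
    have hc2 : cosh (((p.2:ℝ)+1)*y) > 0 := Real.cosh_pos _
    field_simp
    try ring
  calc ∑' p : ℕ×ℕ, (aa y θ p.1 * bb y θ p.2)
      = ∑' p : ℕ×ℕ, 1/2 * (h1 y θ p + h2 y θ p) := tsum_congr point
    _ = 1/2 * ∑' p : ℕ×ℕ, (h1 y θ p + h2 y θ p) := tsum_mul_left
    _ = 1/2 * ((∑' p : ℕ×ℕ, h1 y θ p) + ∑' p : ℕ×ℕ, h2 y θ p) := by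
        rw [Summable.tsum_add (summable_h1 θ hy) (summable_h2 θ hy)]

include hy in
lemma double_eq :
    ∑' p : ℕ×ℕ, (cc θ p.1/2 * g y p.1 p.2) = ∑' p : ℕ×ℕ, (aa y θ p.1 * bb y θ p.2) := by
  have point : ∀ p : ℕ×ℕ, cc θ p.1/2 * g y p.1 p.2 = 1/2 * (L1 y θ p + L2 y θ p) := by
    intro p; rw [g_eq, L1, L2]; ring
  rw [tsum_congr point, tsum_mul_left,
    Summable.tsum_add (summable_L1 θ hy) (summable_L2 θ hy), prod_step θ hy, key_exchange θ hy]

include hy in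
lemma seriesId :
    ∑' j : ℕ, (2*(j:ℝ)+1)/2 * cos ((2*(j:ℝ)+1)*θ/2) / sinh ((2*(j:ℝ)+1)*y/2)
      = Cfun y θ * C1fun y θ := by
  have hsumF := summable_F θ hy
  have hinner : ∀ j : ℕ, Summable (fun n => cc θ j/2 * g y j n) := by
    intro j
    exact hsumF.prod_factor j
  have hOuter : HasSum (fun j : ℕ => ∑' n, cc θ j/2 * g y j n)
      (∑' p : ℕ×ℕ, cc θ p.1/2 * g y p.1 p.2) :=
    HasSum.prod_fiberwise hsumF.hasSum (fun j => (hinner j).hasSum)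
  have hSF : ∀ j : ℕ, (∑' n, cc θ j/2 * g y j n)
      = cc θ j/2 * ((2*(j:ℝ)+1)/sinh ((2*(j:ℝ)+1)*y/2) - 1/cosh ((2*(j:ℝ)+1)*y/2)) := by
    intro j
    rw [tsum_mul_left, (hasSum_g hy j).tsum_eq]
  have per_j : ∀ j : ℕ, (2*(j:ℝ)+1)/2 * cos ((2*(j:ℝ)+1)*θ/2) / sinh ((2*(j:ℝ)+1)*y/2)
      = aa y θ j / 2 + ∑' n, cc θ j/2 * g y j n := by
    intro j
    rw [hSF j, aa, cc]
    have hs : sinh ((2*(j:ℝ)+1)*y/2) ≠ 0 := by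
      have : (0:ℝ) < sinh ((2*(j:ℝ)+1)*y/2) := Real.sinh_pos_iff.mpr (by positivity)
      exact this.ne'
    have hc : cosh ((2*(j:ℝ)+1)*y/2) ≠ 0 := (Real.cosh_pos _).ne'
    field_simp
    ring
  rw [tsum_congr per_j,
    Summable.tsum_add ((summable_abs_aa θ hy).of_abs.div_const 2) hOuter.summable,
    hOuter.tsum_eq, tsum_div_const, double_eq θ hy]
  have hnormaa : Summable (fun n => ‖aa y θ n‖) := by
    simpa [Real.norm_eq_abs] using summable_abs_aa θ hy
  have hnormbb : Summable (fun n => ‖bb y θ n‖) := by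
    simpa [Real.norm_eq_abs] using summable_abs_bb θ hy
  rw [show Cfun y θ = ∑' n, aa y θ n from rfl,
    show C1fun y θ = 1/2 + ∑' n, bb y θ n from rfl,
    ← tsum_mul_tsum_of_summable_norm hnormaa hnormbb]
  ring

end

section
variable {y : ℝ} (hy : 0 < y)

include hy in
lemma sinh_lower (j : ℕ) :
    sinh (y/2) * exp ((j:ℝ)*y) / 2 ≤ sinh ((2*(j:ℝ)+1)*y/2) := by
  have e : (2*(j:ℝ)+1)*y/2 = y/2 + (j:ℝ)*y := by ring
  rw [e, Real.sinh_add]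
  have h1 : exp ((j:ℝ)*y) / 2 ≤ cosh ((j:ℝ)*y) := half_exp_le_cosh _
  have h2 : (0:ℝ) < sinh (y/2) := Real.sinh_pos_iff.mpr (by positivity)
  have h3 : (0:ℝ) ≤ sinh ((j:ℝ)*y) := Real.sinh_nonneg_iff.mpr (by positivity)
  have h4 : (0:ℝ) < cosh (y/2) := Real.cosh_pos _
  nlinarith

include hy in
lemma one_div_sinh_le (j : ℕ) :
    1/sinh ((2*(j:ℝ)+1)*y/2) ≤ (2/sinh (y/2)) * exp (-(j:ℝ)*y) := by
  have h2 : (0:ℝ) < sinh (y/2) := Real.sinh_pos_iff.mpr (by positivity)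
  have hl := sinh_lower hy j
  have hpos : (0:ℝ) < sinh (y/2) * exp ((j:ℝ)*y) / 2 := by positivity
  calc 1/sinh ((2*(j:ℝ)+1)*y/2) ≤ 1/(sinh (y/2) * exp ((j:ℝ)*y) / 2) :=
        one_div_le_one_div_of_le hpos hl
    _ = (2/sinh (y/2)) * exp (-(j:ℝ)*y) := by
        rw [show -(j:ℝ)*y = -((j:ℝ)*y) from by ring, Real.exp_neg]
        field_simp
    
include hy in
lemma summable_uu :
    Summable (fun j : ℕ => (2*(j:ℝ)+1) * ((2/sinh (y/2)) * exp (-(j:ℝ)*y))) := by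
  have hr1 : exp (-y) < 1 := Real.exp_lt_one_iff.mpr (by linarith)
  have hr : ‖exp (-y)‖ < 1 := by
    rw [Real.norm_eq_abs, abs_of_pos (Real.exp_pos _)]; exact hr1
  have h1 : Summable (fun n : ℕ => (n:ℝ)^1 * (exp (-y))^n) :=
    summable_pow_mul_geometric_of_norm_lt_one 1 hr
  have hgeo : Summable (fun n : ℕ => (exp (-y))^n) :=
    summable_geometric_of_lt_one (Real.exp_pos _).le hr1
  have h2 : Summable (fun n : ℕ => (2*(n:ℝ)+1) * (exp (-y))^n) := by
    apply Summable.congr ((h1.mul_left 2).add hgeo)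
    intro n; push_cast; ring
  have h3 := h2.mul_left (2/sinh (y/2))
  apply h3.congr
  intro n
  rw [← Real.exp_nat_mul]
  have e : exp ((n:ℝ) * -y) = exp (-(n:ℝ)*y) := by congr 1; ring
  rw [e]; ring

include hy in
lemma deriv_bound (j : ℕ) (x : ℝ) :
    ‖(2*(j:ℝ)+1)/2 * cos ((2*(j:ℝ)+1)*x/2) / sinh ((2*(j:ℝ)+1)*y/2)‖
      ≤ (2*(j:ℝ)+1) * ((2/sinh (y/2)) * exp (-(j:ℝ)*y)) := by
  have hs : (0:ℝ) < sinh ((2*(j:ℝ)+1)*y/2) := Real.sinh_pos_iff.mpr (by positivity)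
  rw [Real.norm_eq_abs, abs_div, abs_of_pos hs, abs_mul]
  have h1 : |cos ((2*(j:ℝ)+1)*x/2)| ≤ 1 := Real.abs_cos_le_one _
  have h2 : |(2*(j:ℝ)+1)/2| = (2*(j:ℝ)+1)/2 := abs_of_nonneg (by positivity)
  rw [h2]
  have h3 := one_div_sinh_le hy j
  have h4 : (0:ℝ) < 1/sinh ((2*(j:ℝ)+1)*y/2) := by positivity
  have key : |(2*(j:ℝ)+1)/2 * cos ((2*(j:ℝ)+1)*x/2)| / sinh ((2*(j:ℝ)+1)*y/2)
      ≤ ((2*(j:ℝ)+1)/2) * (1/sinh ((2*(j:ℝ)+1)*y/2)) := by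
    rw [abs_mul, h2, div_eq_mul_one_div]
    have := mul_le_mul_of_nonneg_left h1 (by positivity : (0:ℝ) ≤ (2*(j:ℝ)+1)/2)
    nlinarith
  rw [abs_mul, h2] at key
  calc (2*(j:ℝ)+1)/2 * |cos ((2*(j:ℝ)+1)*x/2)| / sinh ((2*(j:ℝ)+1)*y/2)
      ≤ ((2*(j:ℝ)+1)/2) * (1/sinh ((2*(j:ℝ)+1)*y/2)) := key
    _ ≤ ((2*(j:ℝ)+1)/2) * ((2/sinh (y/2)) * exp (-(j:ℝ)*y)) := by
        apply mul_le_mul_of_nonneg_left h3 (by positivity)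
    _ ≤ (2*(j:ℝ)+1) * ((2/sinh (y/2)) * exp (-(j:ℝ)*y)) := by
        have h5 : (0:ℝ) < sinh (y/2) := Real.sinh_pos_iff.mpr (by positivity)
        have h6 : (0:ℝ) < (2/sinh (y/2)) * exp (-(j:ℝ)*y) := by positivity
        nlinarith

include hy in
lemma summable_terms (θ : ℝ) :
    Summable (fun j : ℕ => sin ((2*(j:ℝ)+1)*θ/2)/sinh ((2*(j:ℝ)+1)*y/2)) := by
  apply summable_single hy (2/sinh (y/2))
  intro j
  have hs : (0:ℝ) < sinh ((2*(j:ℝ)+1)*y/2) := Real.sinh_pos_iff.mpr (by positivity)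
  rw [abs_div, abs_of_pos hs]
  have h1 : |sin ((2*(j:ℝ)+1)*θ/2)| ≤ 1 := Real.abs_sin_le_one _
  have h3 := one_div_sinh_le hy j
  have hexp : exp (-(j:ℝ)*y) ≤ exp (-(j:ℝ)*(y/2)) := by
    apply Real.exp_le_exp.mpr
    have hn : (0:ℝ) ≤ (j:ℝ) := Nat.cast_nonneg j
    nlinarith
  have h5 : (0:ℝ) < sinh (y/2) := Real.sinh_pos_iff.mpr (by positivity)
  calc |sin ((2*(j:ℝ)+1)*θ/2)| / sinh ((2*(j:ℝ)+1)*y/2)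
      ≤ 1/sinh ((2*(j:ℝ)+1)*y/2) := by
        apply div_le_div_of_nonneg_right h1 hs.le |>.trans_eq rfl
    _ ≤ (2/sinh (y/2)) * exp (-(j:ℝ)*y) := h3
    _ ≤ (2/sinh (y/2)) * exp (-(j:ℝ)*(y/2)) := by
        apply mul_le_mul_of_nonneg_left hexp (by positivity)

end

end Ram

theorem ramanujan_dS (y : ℝ) (hy : 0 < y) (θ : ℝ) :
    HasDerivAt (Sfun y) (Cfun y θ * C1fun y θ) θ := by
  have key := hasDerivAt_tsum
    (g := fun (j : ℕ) (x : ℝ) => sin ((2*(j:ℝ)+1)*x/2)/sinh ((2*(j:ℝ)+1)*y/2))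
    (g' := fun (j : ℕ) (x : ℝ) => (2*(j:ℝ)+1)/2 * cos ((2*(j:ℝ)+1)*x/2) / sinh ((2*(j:ℝ)+1)*y/2))
    (u := fun j : ℕ => (2*(j:ℝ)+1) * ((2/sinh (y/2)) * exp (-(j:ℝ)*y)))
    (Ram.summable_uu hy)
    (fun j x => by
      have hlin : HasDerivAt (fun z : ℝ => (2*(j:ℝ)+1)*z/2) ((2*(j:ℝ)+1)/2) x := by
        simpa using ((hasDerivAt_id x).const_mul (2*(j:ℝ)+1)).div_const 2
      have hsin := (Real.hasDerivAt_sin ((2*(j:ℝ)+1)*x/2)).comp x hlin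
      have hdiv := hsin.div_const (sinh ((2*(j:ℝ)+1)*y/2))
      exact hdiv.congr_deriv (by ring))
    (fun j x => Ram.deriv_bound hy j x)
    (Ram.summable_terms hy θ) θ
  rw [Ram.seriesId θ hy] at key
  exact key
end

section
/- With S, C, C₁ as in Ramanujan's Chapter 18 definitions, the differentiation formula dC/dθ = -S·C₁ holds. -/
open Real

set_option maxHeartbeats 1000000

namespace RamanujanDC

noncomputable def shm (y : ℝ) (m : ℕ) : ℝ := Real.sinh ((2 * m + 1) * y / 2)
noncomputable def chm (y : ℝ) (m : ℕ) : ℝ := Real.cosh ((2 * m + 1) * y / 2)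
noncomputable def chn (y : ℝ) (n : ℕ) : ℝ := Real.cosh ((n + 1) * y)
noncomputable def w (y : ℝ) (m n : ℕ) : ℝ := 1 / (shm y m * chn y n)

variable {y : ℝ}

lemma arg_pos (hy : 0 < y) (m : ℕ) : 0 < (2 * (m:ℝ) + 1) * y / 2 := by positivity

lemma shm_pos (hy : 0 < y) (m : ℕ) : 0 < shm y m := Real.sinh_pos_iff.2 (arg_pos hy m)
lemma chm_pos (m : ℕ) : 0 < chm y m := Real.cosh_pos _
lemma chn_pos (n : ℕ) : 0 < chn y n := Real.cosh_pos _

/-- `1/cosh t ≤ 2 exp (-t)`. -/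
lemma one_div_cosh_le (t : ℝ) : 1 / Real.cosh t ≤ 2 * exp (-t) := by
  rw [div_le_iff₀ (Real.cosh_pos t)]
  have h1 : Real.cosh t = (exp t + exp (-t)) / 2 := Real.cosh_eq t
  have h2 : exp t * exp (-t) = 1 := by rw [← exp_add]; simp
  nlinarith [exp_pos t, exp_pos (-t), sq_nonneg (exp t - exp (-t))]

/-- `1/sinh t ≤ (2/(1-exp(-y))) exp(-t)` when `2t ≥ y > 0`. -/
lemma one_div_sinh_le (hy : 0 < y) {t : ℝ} (ht : y ≤ 2 * t) :
    1 / Real.sinh t ≤ 2 / (1 - exp (-y)) * exp (-t) := by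
  have hr1 : exp (-y) < 1 := exp_lt_one_iff.2 (by linarith)
  have ht0 : 0 < t := by linarith
  have hs : 0 < Real.sinh t := Real.sinh_pos_iff.2 ht0
  rw [div_le_iff₀ hs, div_mul_eq_mul_div, div_mul_eq_mul_div, le_div_iff₀ (by linarith)]
  have h1 : Real.sinh t = (exp t - exp (-t)) / 2 := Real.sinh_eq t
  have h2 : exp t * exp (-t) = 1 := by rw [← exp_add]; simp
  have h3 : exp (-2 * t) ≤ exp (-y) := exp_le_exp.2 (by linarith)
  have h4 : exp (-2 * t) = exp (-t) * exp (-t) := by rw [← exp_add]; ring_nf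
  nlinarith [exp_pos t, exp_pos (-t)]

lemma exp_arg_le (hy : 0 < y) (m : ℕ) : exp (-((2 * (m:ℝ) + 1) * y / 2)) ≤ exp (-y) ^ m := by
  rw [← exp_nat_mul]
  apply exp_le_exp.2
  have : (m : ℝ) ≥ 0 := m.cast_nonneg
  nlinarith

lemma one_div_shm_le (hy : 0 < y) (m : ℕ) :
    1 / shm y m ≤ 2 / (1 - exp (-y)) * exp (-y) ^ m := by
  have h := one_div_sinh_le hy (t := (2 * (m:ℝ) + 1) * y / 2) (by have : (0:ℝ) ≤ (m:ℝ) := m.cast_nonneg; nlinarith)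
  refine h.trans ?_
  have hr1 : exp (-y) < 1 := exp_lt_one_iff.2 (by linarith)
  have : (0:ℝ) < 2 / (1 - exp (-y)) := div_pos two_pos (by linarith)
  exact mul_le_mul_of_nonneg_left (exp_arg_le hy m) (le_of_lt this)

lemma one_div_chm_le (hy : 0 < y) (m : ℕ) : 1 / chm y m ≤ 2 * exp (-y) ^ m := by
  refine (one_div_cosh_le _).trans ?_
  exact mul_le_mul_of_nonneg_left (exp_arg_le hy m) (by norm_num)

lemma one_div_chn_le (hy : 0 < y) (n : ℕ) : 1 / chn y n ≤ 2 * exp (-y) ^ n := by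
  refine (one_div_cosh_le _).trans ?_
  have : exp (-(((n:ℝ) + 1) * y)) ≤ exp (-y) ^ n := by
    rw [← exp_nat_mul]; apply exp_le_exp.2; nlinarith [n.cast_nonneg (α := ℝ)]
  exact mul_le_mul_of_nonneg_left this (by norm_num)

lemma r_summable (hy : 0 < y) : Summable fun n : ℕ => exp (-y) ^ n :=
  summable_geometric_of_lt_one (exp_nonneg _) (exp_lt_one_iff.2 (by linarith))

lemma nr_summable (hy : 0 < y) : Summable fun n : ℕ => (n:ℝ) * exp (-y) ^ n := by
  have h := summable_pow_mul_geometric_of_norm_lt_one (R := ℝ) 1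
    (r := exp (-y)) (by rw [Real.norm_eq_abs, abs_of_pos (exp_pos _)]; exact exp_lt_one_iff.2 (by linarith))
  simpa using h

noncomputable def sterm (y θ : ℝ) (m : ℕ) : ℝ := Real.sin ((2 * m + 1) * θ / 2) / shm y m
noncomputable def tterm (y θ : ℝ) (n : ℕ) : ℝ := Real.cos ((n + 1) * θ) / chn y n

variable {θ : ℝ}

lemma w_nonneg (hy : 0 < y) (m n : ℕ) : 0 ≤ w y m n :=
  le_of_lt (by have := shm_pos hy m; have := chn_pos (y := y) n; unfold w; positivity)

lemma w_le (hy : 0 < y) (m n : ℕ) :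
    w y m n ≤ (2 / (1 - exp (-y)) * exp (-y) ^ m) * (2 * exp (-y) ^ n) := by
  have h1 := one_div_shm_le hy m
  have h2 := one_div_chn_le hy n
  have hs := shm_pos hy m
  have hc := chn_pos (y := y) n
  have e1 : w y m n = (1 / shm y m) * (1 / chn y n) := by unfold w; rw [div_mul_div_comm]; norm_num
  rw [e1]
  have hr : (0:ℝ) < 1 - exp (-y) := by
    have : exp (-y) < 1 := exp_lt_one_iff.2 (by linarith)
    linarith
  exact mul_le_mul h1 h2 (by positivity)
    (mul_nonneg (le_of_lt (div_pos two_pos hr)) (pow_nonneg (exp_nonneg _) _))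

lemma summable_w_bound (hy : 0 < y) :
    Summable fun p : ℕ × ℕ => (2 / (1 - exp (-y)) * exp (-y) ^ p.1) * (2 * exp (-y) ^ p.2) := by
  have hr : Summable fun m : ℕ => exp (-y) ^ m := r_summable hy
  have hr0 : (0:ℝ) < 1 - exp (-y) := by
    have : exp (-y) < 1 := exp_lt_one_iff.2 (by linarith); linarith
  have ha : ∀ m : ℕ, 0 ≤ 2 / (1 - exp (-y)) * exp (-y) ^ m := fun m =>
    mul_nonneg (le_of_lt (div_pos two_pos hr0)) (pow_nonneg (exp_nonneg _) _)
  have hb : ∀ n : ℕ, 0 ≤ 2 * exp (-y) ^ n := fun n =>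
    mul_nonneg (by norm_num) (pow_nonneg (exp_nonneg _) _)
  exact Summable.mul_of_nonneg (hr.mul_left (2 / (1 - exp (-y)))) (hr.mul_left 2) ha hb

lemma summable_of_w_dom (hy : 0 < y) {f : ℕ × ℕ → ℝ}
    (hb : ∀ p : ℕ × ℕ, |f p| ≤ w y p.1 p.2) : Summable f := by
  apply Summable.of_abs
  exact Summable.of_nonneg_of_le (fun p => abs_nonneg _)
    (fun p => (hb p).trans (w_le hy p.1 p.2)) (summable_w_bound hy)

lemma abs_sterm_le (hy : 0 < y) (m : ℕ) : |sterm y θ m| ≤ 1 / shm y m := by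
  unfold sterm
  have hs := shm_pos hy m
  rw [abs_div, abs_of_pos hs]
  gcongr
  exact abs_sin_le_one _

lemma abs_tterm_le (hy : 0 < y) (n : ℕ) : |tterm y θ n| ≤ 1 / chn y n := by
  unfold tterm
  have hc := chn_pos (y := y) n
  rw [abs_div, abs_of_pos hc]
  gcongr
  exact abs_cos_le_one _

lemma summable_sterm_abs (hy : 0 < y) : Summable fun m => |sterm y θ m| :=
  Summable.of_nonneg_of_le (fun m => abs_nonneg _)
    (fun m => (abs_sterm_le hy m).trans (one_div_shm_le hy m))
    ((r_summable hy).mul_left _)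

lemma summable_tterm_abs (hy : 0 < y) : Summable fun n => |tterm y θ n| :=
  Summable.of_nonneg_of_le (fun n => abs_nonneg _)
    (fun n => (abs_tterm_le hy n).trans (one_div_chn_le hy n))
    ((r_summable hy).mul_left _)

lemma summable_dterm (hy : 0 < y) (θ : ℝ) :
    Summable fun n : ℕ => (2 * (n:ℝ) + 1) * exp (-y) ^ n := by
  have e : (fun n : ℕ => (2 * (n:ℝ) + 1) * exp (-y) ^ n)
      = fun n : ℕ => 2 * ((n:ℝ) * exp (-y) ^ n) + exp (-y) ^ n := by
    funext n; ring
  rw [e]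
  exact ((nr_summable hy).mul_left 2).add (r_summable hy)

lemma summable_cterm (hy : 0 < y) (z : ℝ) :
    Summable fun n : ℕ => Real.cos ((2 * n + 1) * z / 2) / chm y n := by
  apply Summable.of_abs
  apply Summable.of_nonneg_of_le (fun n => abs_nonneg _) (fun n => ?_)
    ((r_summable hy).mul_left 2)
  have hc := chm_pos (y := y) n
  rw [abs_div, abs_of_pos hc]
  refine le_trans ?_ (one_div_chm_le hy n)
  gcongr
  exact abs_cos_le_one _

lemma hasDerivAt_Cfun (hy : 0 < y) (θ : ℝ) :
    HasDerivAt (Cfun y)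
      (∑' n : ℕ, -Real.sin ((2 * n + 1) * θ / 2) * ((2 * (n:ℝ) + 1) * 1 / 2) / chm y n) θ := by
  have hbnd : ∀ (n : ℕ) (z : ℝ),
      ‖-Real.sin ((2 * n + 1) * z / 2) * ((2 * (n:ℝ) + 1) * 1 / 2) / chm y n‖
        ≤ (2 * (n:ℝ) + 1) * exp (-y) ^ n := by
    intro n z
    have hc := chm_pos (y := y) n
    have hn : (0:ℝ) ≤ (n:ℝ) := n.cast_nonneg
    rw [Real.norm_eq_abs, abs_div, abs_of_pos hc, abs_mul]
    have h1 : |(-Real.sin ((2 * n + 1) * z / 2))| ≤ 1 := by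
      rw [abs_neg]; exact abs_sin_le_one _
    have h2 : |(2 * (n:ℝ) + 1) * 1 / 2| = (2 * (n:ℝ) + 1) / 2 := by
      rw [abs_of_nonneg (by linarith)]; ring
    have h3 : 1 / chm y n ≤ 2 * exp (-y) ^ n := one_div_chm_le hy n
    have hrp : (0:ℝ) ≤ exp (-y) ^ n := pow_nonneg (exp_nonneg _) _
    calc |(-Real.sin ((2 * n + 1) * z / 2))| * |(2 * (n:ℝ) + 1) * 1 / 2| / chm y n
        ≤ 1 * ((2 * (n:ℝ) + 1) / 2) / chm y n := by
          rw [h2]; gcongr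
      _ = ((2 * (n:ℝ) + 1) / 2) * (1 / chm y n) := by ring
      _ ≤ ((2 * (n:ℝ) + 1) / 2) * (2 * exp (-y) ^ n) :=
          mul_le_mul_of_nonneg_left h3 (by positivity)
      _ = (2 * (n:ℝ) + 1) * exp (-y) ^ n := by ring
  exact hasDerivAt_tsum (u := fun n : ℕ => (2 * (n:ℝ) + 1) * exp (-y) ^ n)
    (g := fun (n : ℕ) (z : ℝ) => Real.cos ((2 * n + 1) * z / 2) / chm y n)
    (g' := fun (n : ℕ) (z : ℝ) => -Real.sin ((2 * n + 1) * z / 2) * ((2 * (n:ℝ) + 1) * 1 / 2) / chm y n)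
    (summable_dterm hy θ)
    (fun n z => ((((hasDerivAt_id z).const_mul ((2*(n:ℝ)+1))).div_const 2).cos).div_const (chm y n))
    hbnd (summable_cterm hy θ) θ

noncomputable def shn (y : ℝ) (n : ℕ) : ℝ := Real.sinh ((n + 1) * y)
noncomputable def uu (y : ℝ) (m : ℕ) : ℝ := chm y m / shm y m - 1
noncomputable def vv (y : ℝ) (n : ℕ) : ℝ := 1 - shn y n / chn y n

lemma key1 {A B : ℝ} (hA : Real.sinh A ≠ 0) :
    Real.cosh (A + B) / (Real.sinh A * Real.cosh B)
      = Real.cosh A / Real.sinh A + Real.sinh B / Real.cosh B := by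
  have hB : Real.cosh B ≠ 0 := ne_of_gt (Real.cosh_pos B)
  rw [Real.cosh_add]
  field_simp

lemma key2 {A B : ℝ} (hA : Real.sinh A ≠ 0) :
    Real.cosh (A - B) / (Real.sinh A * Real.cosh B)
      = Real.cosh A / Real.sinh A - Real.sinh B / Real.cosh B := by
  have hB : Real.cosh B ≠ 0 := ne_of_gt (Real.cosh_pos B)
  rw [Real.cosh_sub]
  field_simp

lemma uu_eq (hy : 0 < y) (m : ℕ) :
    uu y m = exp (-((2 * m + 1) * y / 2)) / shm y m := by
  have hs := shm_pos hy m
  unfold uu chm shm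
  unfold shm at hs
  rw [← Real.cosh_sub_sinh]
  field_simp

lemma uu_nonneg (hy : 0 < y) (m : ℕ) : 0 ≤ uu y m := by
  rw [uu_eq hy m]
  have hs := shm_pos hy m
  exact div_nonneg (exp_nonneg _) hs.le

lemma uu_le (hy : 0 < y) (m : ℕ) :
    uu y m ≤ 2 / (1 - exp (-y)) * exp (-y) ^ m := by
  rw [uu_eq hy m]
  have hs := shm_pos hy m
  have h1 : exp (-((2 * (m:ℝ) + 1) * y / 2)) ≤ 1 := by
    rw [exp_le_one_iff]
    have := arg_pos hy m; linarith
  calc exp (-((2 * (m:ℝ) + 1) * y / 2)) / shm y m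
      = exp (-((2 * (m:ℝ) + 1) * y / 2)) * (1 / shm y m) := by ring
    _ ≤ 1 * (2 / (1 - exp (-y)) * exp (-y) ^ m) :=
        mul_le_mul h1 (one_div_shm_le hy m) (div_nonneg zero_le_one hs.le) (by norm_num)
    _ = 2 / (1 - exp (-y)) * exp (-y) ^ m := by ring

lemma summable_uu (hy : 0 < y) : Summable (uu y) :=
  Summable.of_nonneg_of_le (uu_nonneg hy) (uu_le hy) ((r_summable hy).mul_left _)

lemma vv_eq (hy : 0 < y) (n : ℕ) :
    vv y n = exp (-((n + 1) * y)) / chn y n := by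
  have hc := chn_pos (y := y) n
  unfold vv chn shn
  unfold chn at hc
  rw [← Real.cosh_sub_sinh]
  field_simp

lemma vv_nonneg (hy : 0 < y) (n : ℕ) : 0 ≤ vv y n := by
  rw [vv_eq hy n]
  have hc := chn_pos (y := y) n
  exact div_nonneg (exp_nonneg _) hc.le

lemma vv_le (hy : 0 < y) (n : ℕ) : vv y n ≤ 2 * exp (-y) ^ n := by
  rw [vv_eq hy n]
  have hc := chn_pos (y := y) n
  have h1 : exp (-(((n:ℝ) + 1) * y)) ≤ 1 := by
    rw [exp_le_one_iff]
    have : (0:ℝ) ≤ (n:ℝ) := n.cast_nonneg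
    nlinarith
  calc exp (-(((n:ℝ) + 1) * y)) / chn y n
      = exp (-(((n:ℝ) + 1) * y)) * (1 / chn y n) := by ring
    _ ≤ 1 * (2 * exp (-y) ^ n) :=
        mul_le_mul h1 (one_div_chn_le hy n) (div_nonneg zero_le_one hc.le) (by norm_num)
    _ = 2 * exp (-y) ^ n := by ring

lemma summable_vv (hy : 0 < y) : Summable (vv y) :=
  Summable.of_nonneg_of_le (vv_nonneg hy) (vv_le hy) ((r_summable hy).mul_left _)

lemma term_L1 (hy : 0 < y) {k n : ℕ} (hn : n < k) :
    w y (k - 1 - n) n * chm y k = (uu y (k - 1 - n) + 1) + (1 - vv y n) := by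
  have hcast : ((k - 1 - n : ℕ) : ℝ) = (k:ℝ) - 1 - n := by
    rw [show k - 1 - n = k - (n + 1) from by omega, Nat.cast_sub hn]
    push_cast
    ring
  have hA : Real.sinh ((2 * ((k:ℝ) - 1 - n) + 1) * y / 2) ≠ 0 := by
    apply ne_of_gt
    apply Real.sinh_pos_iff.2
    have h1 : (n:ℝ) + 1 ≤ (k:ℝ) := by exact_mod_cast hn
    nlinarith
  have e : w y (k - 1 - n) n * chm y k
      = Real.cosh ((2 * ((k:ℝ) - 1 - n) + 1) * y / 2 + ((n:ℝ) + 1) * y)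
        / (Real.sinh ((2 * ((k:ℝ) - 1 - n) + 1) * y / 2) * Real.cosh (((n:ℝ) + 1) * y)) := by
    unfold w chm chn shm
    rw [hcast, div_mul_eq_mul_div, one_mul]
    congr 1
    ring
  rw [e, key1 hA]
  unfold uu vv shn chm shm chn
  rw [hcast]
  ring

lemma term_L2 (hy : 0 < y) (k n : ℕ) :
    w y (k + n + 1) n * chm y k = (uu y (k + n + 1) + 1) - (1 - vv y n) := by
  have hA : Real.sinh ((2 * ((k:ℝ) + n + 1) + 1) * y / 2) ≠ 0 := by
    apply ne_of_gt
    apply Real.sinh_pos_iff.2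
    have h1 : (0:ℝ) ≤ (k:ℝ) := k.cast_nonneg
    have h2 : (0:ℝ) ≤ (n:ℝ) := n.cast_nonneg
    nlinarith
  have e : w y (k + n + 1) n * chm y k
      = Real.cosh ((2 * ((k:ℝ) + n + 1) + 1) * y / 2 - ((n:ℝ) + 1) * y)
        / (Real.sinh ((2 * ((k:ℝ) + n + 1) + 1) * y / 2) * Real.cosh (((n:ℝ) + 1) * y)) := by
    unfold w chm chn shm
    push_cast
    rw [div_mul_eq_mul_div, one_mul]
    congr 1
    ring
  rw [e, key2 hA]
  unfold uu vv shn chm shm chn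
  push_cast
  ring

lemma term_L3 (hy : 0 < y) (k m : ℕ) :
    w y m (m + k) * chm y k = (uu y m + 1) - (1 - vv y (m + k)) := by
  have hA : Real.sinh ((2 * (m:ℝ) + 1) * y / 2) ≠ 0 :=
    ne_of_gt (Real.sinh_pos_iff.2 (arg_pos hy m))
  have e : w y m (m + k) * chm y k
      = Real.cosh ((2 * (m:ℝ) + 1) * y / 2 - ((m:ℝ) + k + 1) * y)
        / (Real.sinh ((2 * (m:ℝ) + 1) * y / 2) * Real.cosh (((m:ℝ) + k + 1) * y)) := by
    unfold w chm chn shm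
    push_cast
    rw [div_mul_eq_mul_div, one_mul]
    rw [show (2 * (m:ℝ) + 1) * y / 2 - ((m:ℝ) + k + 1) * y = -((2 * (k:ℝ) + 1) * y / 2) from by ring,
      Real.cosh_neg]
    try congr 2
    try ring
  rw [e, key2 hA]
  unfold uu vv shn chm shm chn
  push_cast
  ring

/-- Bounds for one-variable domination. -/
lemma w_le_left (hy : 0 < y) (m n : ℕ) :
    w y m n ≤ 4 / (1 - exp (-y)) * exp (-y) ^ m := by
  have hr1 : exp (-y) < 1 := exp_lt_one_iff.2 (by linarith)
  have hr0 : (0:ℝ) < 1 - exp (-y) := by linarith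
  refine (w_le hy m n).trans ?_
  have h1 : exp (-y) ^ n ≤ 1 := pow_le_one₀ (exp_nonneg _) hr1.le
  have h2 : (0:ℝ) ≤ exp (-y) ^ m := pow_nonneg (exp_nonneg _) _
  calc (2 / (1 - exp (-y)) * exp (-y) ^ m) * (2 * exp (-y) ^ n)
      = (4 / (1 - exp (-y)) * exp (-y) ^ m) * exp (-y) ^ n := by ring
    _ ≤ (4 / (1 - exp (-y)) * exp (-y) ^ m) * 1 := by
        apply mul_le_mul_of_nonneg_left h1
        have : (0:ℝ) < 4 / (1 - exp (-y)) := by positivity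
        positivity
    _ = 4 / (1 - exp (-y)) * exp (-y) ^ m := by ring

lemma w_le_right (hy : 0 < y) (m n : ℕ) :
    w y m n ≤ 4 / (1 - exp (-y)) * exp (-y) ^ n := by
  have hr1 : exp (-y) < 1 := exp_lt_one_iff.2 (by linarith)
  have hr0 : (0:ℝ) < 1 - exp (-y) := by linarith
  refine (w_le hy m n).trans ?_
  have h1 : exp (-y) ^ m ≤ 1 := pow_le_one₀ (exp_nonneg _) hr1.le
  calc (2 / (1 - exp (-y)) * exp (-y) ^ m) * (2 * exp (-y) ^ n)
      = (4 / (1 - exp (-y)) * exp (-y) ^ n) * exp (-y) ^ m := by ring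
    _ ≤ (4 / (1 - exp (-y)) * exp (-y) ^ n) * 1 := by
        apply mul_le_mul_of_nonneg_left h1
        have h2 : (0:ℝ) ≤ exp (-y) ^ n := pow_nonneg (exp_nonneg _) _
        positivity
    _ = 4 / (1 - exp (-y)) * exp (-y) ^ n := by ring

lemma summable_w_diag2 (hy : 0 < y) (k : ℕ) : Summable fun n : ℕ => w y (k + n + 1) n :=
  Summable.of_nonneg_of_le (fun n => w_nonneg hy _ _) (fun n => w_le_right hy _ _)
    ((r_summable hy).mul_left _)

lemma summable_w_diag3 (hy : 0 < y) (k : ℕ) : Summable fun m : ℕ => w y m (m + k) :=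
  Summable.of_nonneg_of_le (fun m => w_nonneg hy _ _) (fun m => w_le_left hy _ _)
    ((r_summable hy).mul_left _)

lemma summable_uu_shift (hy : 0 < y) (k : ℕ) : Summable fun n : ℕ => uu y (k + n + 1) := by
  have e : (fun n : ℕ => uu y (k + n + 1)) = fun n : ℕ => uu y (n + (k + 1)) := by
    funext n; congr 1; omega
  rw [e]
  exact (summable_nat_add_iff (k + 1)).2 (summable_uu hy)

lemma summable_vv_shift (hy : 0 < y) (k : ℕ) : Summable fun m : ℕ => vv y (m + k) :=
  (summable_nat_add_iff k).2 (summable_vv hy)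

noncomputable def Ak (y : ℝ) (k : ℕ) : ℝ := ∑ n ∈ Finset.range k, w y (k - 1 - n) n
noncomputable def Bk (y : ℝ) (k : ℕ) : ℝ := ∑' n : ℕ, w y (k + n + 1) n
noncomputable def Dk (y : ℝ) (k : ℕ) : ℝ := ∑' m : ℕ, w y m (m + k)

/-- The key coefficient identity. -/
lemma star (hy : 0 < y) (k : ℕ) :
    1 / shm y k + Ak y k + Bk y k - Dk y k = (2 * k + 1) / chm y k := by
  unfold Ak Bk Dk
  have hchm := chm_pos (y := y) k
  have hshm := shm_pos hy k
  rw [eq_div_iff (ne_of_gt hchm)]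
  have hU := summable_uu hy
  have hV := summable_vv hy
  rw [sub_mul, add_mul, add_mul, Finset.sum_mul, ← tsum_mul_right, ← tsum_mul_right]
  have e1 : 1 / shm y k * chm y k = uu y k + 1 := by
    unfold uu
    field_simp
    ring
  have e2 : ∑ n ∈ Finset.range k, w y (k - 1 - n) n * chm y k
      = (∑ j ∈ Finset.range k, uu y j) + 2 * k - ∑ n ∈ Finset.range k, vv y n := by
    rw [Finset.sum_congr rfl (fun n hn => term_L1 hy (Finset.mem_range.mp hn))]
    rw [Finset.sum_add_distrib, Finset.sum_add_distrib, Finset.sum_sub_distrib]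
    rw [Finset.sum_range_reflect (fun j => uu y j) k]
    simp [Finset.sum_const, Finset.card_range, nsmul_eq_mul]
    ring
  have e3 : ∑' n : ℕ, w y (k + n + 1) n * chm y k
      = ((∑' j : ℕ, uu y j) - ∑ j ∈ Finset.range (k + 1), uu y j) + ∑' n : ℕ, vv y n := by
    rw [tsum_congr (fun n => term_L2 hy k n)]
    have e : (fun n : ℕ => (uu y (k + n + 1) + 1) - (1 - vv y n))
        = fun n : ℕ => uu y (k + n + 1) + vv y n := by
      funext n; ring
    rw [e, Summable.tsum_add (summable_uu_shift hy k) hV]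
    congr 1
    have e' : (fun n : ℕ => uu y (k + n + 1)) = fun n : ℕ => uu y (n + (k + 1)) := by
      funext n; congr 1; omega
    rw [e']
    have := Summable.sum_add_tsum_nat_add (f := uu y) (k + 1) hU
    linarith
  have e4 : ∑' m : ℕ, w y m (m + k) * chm y k
      = (∑' j : ℕ, uu y j) + ((∑' n : ℕ, vv y n) - ∑ j ∈ Finset.range k, vv y j) := by
    rw [tsum_congr (fun m => term_L3 hy k m)]
    have e : (fun m : ℕ => (uu y m + 1) - (1 - vv y (m + k)))
        = fun m : ℕ => uu y m + vv y (m + k) := by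
      funext m; ring
    rw [e, Summable.tsum_add hU (summable_vv_shift hy k)]
    congr 1
    have := Summable.sum_add_tsum_nat_add (f := vv y) k hV
    linarith
  rw [e1, e2, e3, e4, Finset.sum_range_succ]
  ring

noncomputable def sink (θ : ℝ) (k : ℕ) : ℝ := Real.sin ((2 * k + 1) * θ / 2)

noncomputable def Pf (y θ : ℝ) (p : ℕ × ℕ) : ℝ :=
  Real.sin ((2 * ((p.1:ℝ) + p.2 + 1) + 1) * θ / 2) / 2 * w y p.1 p.2

noncomputable def Qf (y θ : ℝ) (p : ℕ × ℕ) : ℝ :=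
  Real.sin ((2 * (p.1:ℝ) + 1) * θ / 2 - ((p.2:ℝ) + 1) * θ) / 2 * w y p.1 p.2

noncomputable def Qp (y θ : ℝ) (p : ℕ × ℕ) : ℝ := if p.2 < p.1 then Qf y θ p else 0
noncomputable def Qm (y θ : ℝ) (p : ℕ × ℕ) : ℝ := if p.2 < p.1 then 0 else Qf y θ p

noncomputable def Ff (y θ : ℝ) (q : ℕ × ℕ) : ℝ :=
  if q.2 < q.1 then sink θ q.1 / 2 * w y (q.1 - 1 - q.2) q.2 else 0

lemma split_term (hy : 0 < y) (m n : ℕ) :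
    sterm y θ m * tterm y θ n = Pf y θ (m, n) + Qf y θ (m, n) := by
  have e : Real.sin ((2 * (m:ℝ) + 1) * θ / 2) * Real.cos (((n:ℝ) + 1) * θ)
      = Real.sin ((2 * ((m:ℝ) + n + 1) + 1) * θ / 2) / 2
        + Real.sin ((2 * (m:ℝ) + 1) * θ / 2 - ((n:ℝ) + 1) * θ) / 2 := by
    rw [show (2 * ((m:ℝ) + n + 1) + 1) * θ / 2
        = (2 * (m:ℝ) + 1) * θ / 2 + ((n:ℝ) + 1) * θ from by ring,
      Real.sin_add, Real.sin_sub]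
    ring
  unfold sterm tterm Pf Qf w
  simp only
  rw [div_mul_div_comm, e]
  ring

lemma abs_Pf_le (hy : 0 < y) (p : ℕ × ℕ) : |Pf y θ p| ≤ w y p.1 p.2 := by
  unfold Pf
  rw [abs_mul, abs_of_nonneg (w_nonneg hy _ _)]
  have h1 : |Real.sin ((2 * ((p.1:ℝ) + p.2 + 1) + 1) * θ / 2) / 2| ≤ 1 := by
    rw [abs_div]
    have := abs_sin_le_one ((2 * ((p.1:ℝ) + p.2 + 1) + 1) * θ / 2)
    rw [abs_two]
    linarith
  calc |Real.sin ((2 * ((p.1:ℝ) + p.2 + 1) + 1) * θ / 2) / 2| * w y p.1 p.2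
      ≤ 1 * w y p.1 p.2 := mul_le_mul_of_nonneg_right h1 (w_nonneg hy _ _)
    _ = w y p.1 p.2 := one_mul _

lemma abs_Qf_le (hy : 0 < y) (p : ℕ × ℕ) : |Qf y θ p| ≤ w y p.1 p.2 := by
  unfold Qf
  rw [abs_mul, abs_of_nonneg (w_nonneg hy _ _)]
  have h1 : |Real.sin ((2 * (p.1:ℝ) + 1) * θ / 2 - ((p.2:ℝ) + 1) * θ) / 2| ≤ 1 := by
    rw [abs_div]
    have := abs_sin_le_one ((2 * (p.1:ℝ) + 1) * θ / 2 - ((p.2:ℝ) + 1) * θ)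
    rw [abs_two]
    linarith
  calc |Real.sin ((2 * (p.1:ℝ) + 1) * θ / 2 - ((p.2:ℝ) + 1) * θ) / 2| * w y p.1 p.2
      ≤ 1 * w y p.1 p.2 := mul_le_mul_of_nonneg_right h1 (w_nonneg hy _ _)
    _ = w y p.1 p.2 := one_mul _

lemma summable_Pf (hy : 0 < y) : Summable (Pf y θ) :=
  summable_of_w_dom hy (abs_Pf_le hy)

lemma summable_Qf (hy : 0 < y) : Summable (Qf y θ) :=
  summable_of_w_dom hy (abs_Qf_le hy)

lemma summable_Qp (hy : 0 < y) : Summable (Qp y θ) := by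
  apply summable_of_w_dom hy
  intro p
  unfold Qp
  split_ifs with h
  · exact abs_Qf_le hy p
  · simpa using w_nonneg hy p.1 p.2

lemma summable_Qm (hy : 0 < y) : Summable (Qm y θ) := by
  apply summable_of_w_dom hy
  intro p
  unfold Qm
  split_ifs with h
  · simpa using w_nonneg hy p.1 p.2
  · exact abs_Qf_le hy p

lemma Qf_eq (p : ℕ × ℕ) : Qf y θ p = Qp y θ p + Qm y θ p := by
  unfold Qp Qm
  split_ifs with h <;> ring

/-! ### The `Pf` rearrangement -/

lemma g1_inj : Function.Injective (fun p : ℕ × ℕ => (p.1 + p.2 + 1, p.2)) := by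
  intro a b h
  simp only [Prod.mk.injEq] at h
  exact Prod.ext (by omega) h.2

lemma Ff_comp (p : ℕ × ℕ) :
    Ff y θ (p.1 + p.2 + 1, p.2) = Pf y θ p := by
  unfold Ff Pf sink
  simp only
  rw [if_pos (by omega : p.2 < p.1 + p.2 + 1)]
  rw [show p.1 + p.2 + 1 - 1 - p.2 = p.1 from by omega]
  rw [show ((p.1 + p.2 + 1 : ℕ) : ℝ) = (p.1:ℝ) + p.2 + 1 from by push_cast; ring]

lemma Ff_supp : ∀ q ∉ Set.range (fun p : ℕ × ℕ => (p.1 + p.2 + 1, p.2)), Ff y θ q = 0 := by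
  intro q hq
  unfold Ff
  rw [if_neg]
  intro hlt
  exact hq ⟨(q.1 - q.2 - 1, q.2), Prod.ext (by simp; omega) rfl⟩

lemma Ff_supp' : Function.support (Ff y θ) ⊆ Set.range (fun p : ℕ × ℕ => (p.1 + p.2 + 1, p.2)) :=
  fun q hq => by by_contra hr; exact hq (Ff_supp q hr)

lemma Ff_fiber_zero (k : ℕ) : ∀ n ∉ Finset.range k, Ff y θ (k, n) = 0 := by
  intro n hn
  unfold Ff
  simp only
  rw [if_neg (by simpa using hn)]

lemma summable_Ff (hy : 0 < y) : Summable (Ff y θ) := by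
  refine (g1_inj.summable_iff Ff_supp).1 ?_
  have e : (Ff y θ) ∘ (fun p : ℕ × ℕ => (p.1 + p.2 + 1, p.2)) = Pf y θ :=
    funext fun p => Ff_comp p
  rw [e]
  exact summable_Pf hy

lemma Ff_inner (k : ℕ) : ∑' n : ℕ, Ff y θ (k, n) = sink θ k / 2 * Ak y k := by
  rw [tsum_eq_sum (Ff_fiber_zero k)]
  unfold Ak
  rw [Finset.mul_sum]
  apply Finset.sum_congr rfl
  intro n hn
  unfold Ff
  simp only
  rw [if_pos (Finset.mem_range.mp hn)]

lemma Pf_hasSum (hy : 0 < y) :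
    HasSum (fun k => sink θ k / 2 * Ak y k) (∑' p : ℕ × ℕ, Pf y θ p) := by
  have h1 : ∑' p : ℕ × ℕ, Pf y θ p = ∑' q : ℕ × ℕ, Ff y θ q := by
    rw [← g1_inj.tsum_eq Ff_supp']
    exact tsum_congr fun p => (Ff_comp p).symm
  rw [h1]
  have h2 := (summable_Ff (θ := θ) hy).hasSum.prod_fiberwise
    (fun k => (summable_of_ne_finset_zero (Ff_fiber_zero k)).hasSum)
  have e : (fun k => ∑' n : ℕ, Ff y θ (k, n)) = fun k => sink θ k / 2 * Ak y k :=
    funext fun k => Ff_inner k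
  rwa [e] at h2

/-! ### The `Qp` rearrangement -/

lemma Qp_comp (hy : 0 < y) (q : ℕ × ℕ) :
    Qp y θ (q.1 + q.2 + 1, q.2) = sink θ q.1 / 2 * w y (q.1 + q.2 + 1) q.2 := by
  unfold Qp Qf sink
  simp only
  rw [if_pos (by omega : q.2 < q.1 + q.2 + 1)]
  rw [show (2 * ((q.1 + q.2 + 1 : ℕ) : ℝ) + 1) * θ / 2 - ((q.2:ℝ) + 1) * θ
      = (2 * (q.1:ℝ) + 1) * θ / 2 from by push_cast; ring]

lemma Qp_supp : ∀ q ∉ Set.range (fun p : ℕ × ℕ => (p.1 + p.2 + 1, p.2)), Qp y θ q = 0 := by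
  intro q hq
  unfold Qp
  rw [if_neg]
  intro hlt
  exact hq ⟨(q.1 - q.2 - 1, q.2), Prod.ext (by simp; omega) rfl⟩

lemma Qp_supp' : Function.support (Qp y θ) ⊆ Set.range (fun p : ℕ × ℕ => (p.1 + p.2 + 1, p.2)) :=
  fun q hq => by by_contra hr; exact hq (Qp_supp q hr)

lemma Qp_hasSum (hy : 0 < y) :
    HasSum (fun k => sink θ k / 2 * Bk y k) (∑' p : ℕ × ℕ, Qp y θ p) := by
  have h1 : ∑' p : ℕ × ℕ, Qp y θ p
      = ∑' q : ℕ × ℕ, sink θ q.1 / 2 * w y (q.1 + q.2 + 1) q.2 := by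
    rw [← g1_inj.tsum_eq Qp_supp']
    exact tsum_congr fun q => Qp_comp hy q
  rw [h1]
  have hsum : Summable (fun q : ℕ × ℕ => sink θ q.1 / 2 * w y (q.1 + q.2 + 1) q.2) := by
    have e : (Qp y θ) ∘ (fun p : ℕ × ℕ => (p.1 + p.2 + 1, p.2))
        = fun q : ℕ × ℕ => sink θ q.1 / 2 * w y (q.1 + q.2 + 1) q.2 :=
      funext fun q => Qp_comp hy q
    rw [← e]
    exact ((g1_inj.summable_iff Qp_supp).2 (summable_Qp hy))
  have h2 := hsum.hasSum.prod_fiberwise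
    (fun k => (((summable_w_diag2 hy k).mul_left (sink θ k / 2)).hasSum))
  have e : (fun k => ∑' n : ℕ, sink θ k / 2 * w y (k + n + 1) n)
      = fun k => sink θ k / 2 * Bk y k := by
    funext k
    unfold Bk
    rw [tsum_mul_left]
  rwa [e] at h2

/-! ### The `Qm` rearrangement -/

lemma g3_inj : Function.Injective (fun p : ℕ × ℕ => (p.2, p.2 + p.1)) := by
  intro a b h
  simp only [Prod.mk.injEq] at h
  exact Prod.ext (by omega) h.1

lemma Qm_comp (hy : 0 < y) (q : ℕ × ℕ) :
    Qm y θ (q.2, q.2 + q.1) = -(sink θ q.1) / 2 * w y q.2 (q.2 + q.1) := by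
  unfold Qm Qf sink
  simp only
  rw [if_neg (by omega : ¬ (q.2 + q.1 < q.2))]
  rw [show (2 * ((q.2:ℕ) : ℝ) + 1) * θ / 2 - (((q.2 + q.1 : ℕ) : ℝ) + 1) * θ
      = -((2 * (q.1:ℝ) + 1) * θ / 2) from by push_cast; ring]
  rw [Real.sin_neg]

lemma Qm_supp : ∀ q ∉ Set.range (fun p : ℕ × ℕ => (p.2, p.2 + p.1)), Qm y θ q = 0 := by
  intro q hq
  unfold Qm
  rw [if_pos]
  by_contra hlt
  push_neg at hlt
  exact hq ⟨(q.2 - q.1, q.1), Prod.ext rfl (by simp; omega)⟩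

lemma Qm_supp' : Function.support (Qm y θ) ⊆ Set.range (fun p : ℕ × ℕ => (p.2, p.2 + p.1)) :=
  fun q hq => by by_contra hr; exact hq (Qm_supp q hr)

lemma Qm_hasSum (hy : 0 < y) :
    HasSum (fun k => -(sink θ k) / 2 * Dk y k) (∑' p : ℕ × ℕ, Qm y θ p) := by
  have h1 : ∑' p : ℕ × ℕ, Qm y θ p
      = ∑' q : ℕ × ℕ, -(sink θ q.1) / 2 * w y q.2 (q.2 + q.1) := by
    rw [← g3_inj.tsum_eq Qm_supp']
    exact tsum_congr fun q => Qm_comp hy q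
  rw [h1]
  have hsum : Summable (fun q : ℕ × ℕ => -(sink θ q.1) / 2 * w y q.2 (q.2 + q.1)) := by
    have e : (Qm y θ) ∘ (fun p : ℕ × ℕ => (p.2, p.2 + p.1))
        = fun q : ℕ × ℕ => -(sink θ q.1) / 2 * w y q.2 (q.2 + q.1) :=
      funext fun q => Qm_comp hy q
    rw [← e]
    exact ((g3_inj.summable_iff Qm_supp).2 (summable_Qm hy))
  have h2 := hsum.hasSum.prod_fiberwise
    (fun k => ((summable_w_diag3 hy k).mul_left (-(sink θ k) / 2)).hasSum)
  have e : (fun k => ∑' m : ℕ, -(sink θ k) / 2 * w y m (m + k))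
      = fun k => -(sink θ k) / 2 * Dk y k := by
    funext k
    unfold Dk
    rw [tsum_mul_left]
  rwa [e] at h2

/-! ### Putting the product together -/

lemma prod_eq (hy : 0 < y) (θ : ℝ) :
    Sfun y θ * C1fun y θ
      = ∑' k : ℕ, (2 * (k:ℝ) + 1) / 2 * Real.sin ((2 * k + 1) * θ / 2) / chm y k := by
  have hS : Sfun y θ = ∑' m : ℕ, sterm y θ m := rfl
  have hC1 : C1fun y θ = 1 / 2 + ∑' n : ℕ, tterm y θ n := rfl
  have hsn : Summable fun m : ℕ => ‖sterm y θ m‖ := by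
    simpa only [Real.norm_eq_abs] using summable_sterm_abs (θ := θ) hy
  have htn : Summable fun n : ℕ => ‖tterm y θ n‖ := by
    simpa only [Real.norm_eq_abs] using summable_tterm_abs (θ := θ) hy
  have hP := summable_Pf (θ := θ) hy
  have hQp := summable_Qp (θ := θ) hy
  have hQm := summable_Qm (θ := θ) hy
  have e1 : Sfun y θ * C1fun y θ
      = (∑' m : ℕ, sterm y θ m) * (1 / 2) + ∑' p : ℕ × ℕ, sterm y θ p.1 * tterm y θ p.2 := by
    rw [hS, hC1, mul_add, tsum_mul_tsum_of_summable_norm hsn htn]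
  have t1 : ∑' p : ℕ × ℕ, (Pf y θ p + (Qp y θ p + Qm y θ p))
      = (∑' p : ℕ × ℕ, Pf y θ p) + ∑' p : ℕ × ℕ, (Qp y θ p + Qm y θ p) :=
    Summable.tsum_add hP (hQp.add hQm)
  have t2 : ∑' p : ℕ × ℕ, (Qp y θ p + Qm y θ p)
      = (∑' p : ℕ × ℕ, Qp y θ p) + ∑' p : ℕ × ℕ, Qm y θ p := Summable.tsum_add hQp hQm
  have e2 : ∑' p : ℕ × ℕ, sterm y θ p.1 * tterm y θ p.2
      = (∑' p : ℕ × ℕ, Pf y θ p) + ((∑' p : ℕ × ℕ, Qp y θ p) + ∑' p : ℕ × ℕ, Qm y θ p) := by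
    rw [← t2, ← t1]
    apply tsum_congr
    intro p
    have := split_term (θ := θ) hy p.1 p.2
    rw [show (p.1, p.2) = p from rfl] at this
    rw [this, Qf_eq]
  have e3 : (∑' m : ℕ, sterm y θ m) * (1 / 2) = ∑' k : ℕ, sink θ k / 2 * (1 / shm y k) := by
    rw [← tsum_mul_right]
    apply tsum_congr
    intro k
    unfold sterm sink
    ring
  have h2 := Pf_hasSum (θ := θ) hy
  have h3 := Qp_hasSum (θ := θ) hy
  have h4 := Qm_hasSum (θ := θ) hy
  have hs1 : Summable fun k : ℕ => sink θ k / 2 * (1 / shm y k) := by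
    refine Summable.congr (((summable_sterm_abs (θ := θ) hy).of_abs).mul_right (1 / 2)) ?_
    intro k
    unfold sterm sink
    ring
  have comb1 : ∑' k : ℕ, (sink θ k / 2 * (1 / shm y k) + sink θ k / 2 * Ak y k)
      = (∑' k : ℕ, sink θ k / 2 * (1 / shm y k)) + ∑' k : ℕ, sink θ k / 2 * Ak y k :=
    Summable.tsum_add hs1 h2.summable
  have comb2 : ∑' k : ℕ, (sink θ k / 2 * Bk y k + -(sink θ k) / 2 * Dk y k)
      = (∑' k : ℕ, sink θ k / 2 * Bk y k) + ∑' k : ℕ, -(sink θ k) / 2 * Dk y k :=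
    Summable.tsum_add h3.summable h4.summable
  have comb3 : ∑' k : ℕ, ((sink θ k / 2 * (1 / shm y k) + sink θ k / 2 * Ak y k)
        + (sink θ k / 2 * Bk y k + -(sink θ k) / 2 * Dk y k))
      = (∑' k : ℕ, (sink θ k / 2 * (1 / shm y k) + sink θ k / 2 * Ak y k))
        + ∑' k : ℕ, (sink θ k / 2 * Bk y k + -(sink θ k) / 2 * Dk y k) :=
    Summable.tsum_add (hs1.add h2.summable) (h3.summable.add h4.summable)
  have key : ∀ k : ℕ, (sink θ k / 2 * (1 / shm y k) + sink θ k / 2 * Ak y k)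
        + (sink θ k / 2 * Bk y k + -(sink θ k) / 2 * Dk y k)
      = (2 * (k:ℝ) + 1) / 2 * Real.sin ((2 * k + 1) * θ / 2) / chm y k := by
    intro k
    have hstar := star hy k
    calc (sink θ k / 2 * (1 / shm y k) + sink θ k / 2 * Ak y k)
          + (sink θ k / 2 * Bk y k + -(sink θ k) / 2 * Dk y k)
        = sink θ k / 2 * (1 / shm y k + Ak y k + Bk y k - Dk y k) := by ring
      _ = sink θ k / 2 * ((2 * (k:ℝ) + 1) / chm y k) := by rw [hstar]
      _ = (2 * (k:ℝ) + 1) / 2 * Real.sin ((2 * k + 1) * θ / 2) / chm y k := by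
          unfold sink
          ring
  calc Sfun y θ * C1fun y θ
      = (∑' m : ℕ, sterm y θ m) * (1 / 2) + ∑' p : ℕ × ℕ, sterm y θ p.1 * tterm y θ p.2 := e1
    _ = (∑' k : ℕ, sink θ k / 2 * (1 / shm y k))
        + ((∑' p : ℕ × ℕ, Pf y θ p) + ((∑' p : ℕ × ℕ, Qp y θ p) + ∑' p : ℕ × ℕ, Qm y θ p)) := by
        rw [e2, e3]
    _ = (∑' k : ℕ, sink θ k / 2 * (1 / shm y k))
        + ((∑' k : ℕ, sink θ k / 2 * Ak y k)
          + ((∑' k : ℕ, sink θ k / 2 * Bk y k) + ∑' k : ℕ, -(sink θ k) / 2 * Dk y k)) := by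
        rw [h2.tsum_eq, h3.tsum_eq, h4.tsum_eq]
    _ = (∑' k : ℕ, (sink θ k / 2 * (1 / shm y k) + sink θ k / 2 * Ak y k))
        + ∑' k : ℕ, (sink θ k / 2 * Bk y k + -(sink θ k) / 2 * Dk y k) := by
        rw [comb1, comb2]
        ring
    _ = ∑' k : ℕ, ((sink θ k / 2 * (1 / shm y k) + sink θ k / 2 * Ak y k)
          + (sink θ k / 2 * Bk y k + -(sink θ k) / 2 * Dk y k)) := comb3.symm
    _ = ∑' k : ℕ, (2 * (k:ℝ) + 1) / 2 * Real.sin ((2 * k + 1) * θ / 2) / chm y k :=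
        tsum_congr key

end RamanujanDC

theorem ramanujan_dC (y : ℝ) (hy : 0 < y) (θ : ℝ) :
    HasDerivAt (Cfun y) (-(Sfun y θ * C1fun y θ)) θ := by
  have h := RamanujanDC.hasDerivAt_Cfun hy θ
  have e : -(Sfun y θ * C1fun y θ)
      = ∑' n : ℕ, -Real.sin ((2 * n + 1) * θ / 2) * ((2 * (n:ℝ) + 1) * 1 / 2)
          / RamanujanDC.chm y n := by
    rw [RamanujanDC.prod_eq hy θ, ← tsum_neg]
    exact tsum_congr fun n => by ring
  rwa [← e] at h
end
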